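/- arXiv:1204.1220 — 11 statements merged into one kernel-verified Lean document; each statement's English description precedes it below -/
import Mathlib

section
/- If MTFA (the semidefinite program minimizing tr(L) subject to X = D + L, L positive semidefinite, D diagonal) is feasible for a symmetric matrix X, then it has a unique optimal solution. -/
open Matrix

namespace MTFA

variable {n : ℕ}

lemma dot_symm {L : Matrix (Fin n) (Fin n) ℝ} (hL : L.IsHermitian) (v w : Fin n → ℝ) :
    v ⬝ᵥ L *ᵥ w = w ⬝ᵥ L *ᵥ v := by
  have hLt : Lᵀ = L := by
    have := hL.eq
    rwa [Matrix.conjTranspose_eq_transpose_of_trivial] at this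
  rw [Matrix.dotProduct_mulVec v L w, ← hLt, Matrix.vecMul_transpose, hLt,
    dotProduct_comm]

lemma mulVec_dot {L : Matrix (Fin n) (Fin n) ℝ} (hL : L.IsHermitian) (v w : Fin n → ℝ) :
    w ⬝ᵥ L *ᵥ v = (L *ᵥ w) ⬝ᵥ v := by
  rw [← dot_symm hL v w]
  exact dotProduct_comm _ _

lemma psd_nonneg {L : Matrix (Fin n) (Fin n) ℝ} (hL : L.PosSemidef) (v : Fin n → ℝ) :
    0 ≤ v ⬝ᵥ L *ᵥ v := by
  simpa using hL.dotProduct_mulVec_nonneg v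

lemma cs {L : Matrix (Fin n) (Fin n) ℝ} (hL : L.PosSemidef) (v w : Fin n → ℝ) :
    (w ⬝ᵥ L *ᵥ v) ^ 2 ≤ (w ⬝ᵥ L *ᵥ w) * (v ⬝ᵥ L *ᵥ v) := by
  have key : ∀ x : ℝ, 0 ≤ (w ⬝ᵥ L *ᵥ w) * (x * x) + (2 * (w ⬝ᵥ L *ᵥ v)) * x
      + v ⬝ᵥ L *ᵥ v := by
    intro x
    have h := psd_nonneg hL (v + x • w)
    have hsym := dot_symm hL.1 v w
    simp only [Matrix.mulVec_add, Matrix.mulVec_smul, dotProduct_add,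
      add_dotProduct, smul_dotProduct, dotProduct_smul,
      smul_eq_mul] at h
    rw [hsym] at h
    ring_nf at h ⊢
    linarith [h]
  have hd := discrim_le_zero key
  rw [discrim] at hd
  nlinarith [hd]

end MTFA

namespace MTFA

lemma exists_mulVec_eq_single {L : Matrix (Fin n) (Fin n) ℝ} (hL : L.IsHermitian)
    (i : Fin n) (h : ∀ v, L *ᵥ v = 0 → v i = 0) :
    ∃ w, L *ᵥ w = Pi.single i 1 := by
  set T : EuclideanSpace ℝ (Fin n) →ₗ[ℝ] EuclideanSpace ℝ (Fin n) := Matrix.toEuclideanLin L with hT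
  have hadj : LinearMap.adjoint T = T := by
    rw [hT, ← Matrix.toEuclideanLin_conjTranspose_eq_adjoint, hL.eq]
  have hker : ∀ z : EuclideanSpace ℝ (Fin n), z ∈ LinearMap.ker T →
      L *ᵥ (WithLp.equiv 2 (Fin n → ℝ) z) = 0 := by
    intro z hz
    have : WithLp.equiv 2 (Fin n → ℝ) (T z) = L *ᵥ WithLp.equiv 2 (Fin n → ℝ) z :=
      Matrix.ofLp_toEuclideanLin_apply L z
    rw [LinearMap.mem_ker] at hz
    rw [hz] at this
    simpa using this.symm
  have hrange : LinearMap.range T = (LinearMap.ker T)ᗮ := by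
    apply Submodule.eq_of_le_of_finrank_eq
    · rintro x ⟨y, rfl⟩
      rw [Submodule.mem_orthogonal]
      intro z hz
      rw [← hadj, LinearMap.adjoint_inner_right]
      rw [LinearMap.mem_ker] at hz
      rw [hz, inner_zero_left]
    · have h1 := LinearMap.finrank_range_add_finrank_ker T
      have h2 := Submodule.finrank_add_finrank_orthogonal (K := LinearMap.ker T)
      omega
  have hmem : EuclideanSpace.single i (1:ℝ) ∈ (LinearMap.ker T)ᗮ := by
    rw [Submodule.mem_orthogonal]
    intro z hz
    rw [EuclideanSpace.inner_single_right]
    have := h _ (hker z hz)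
    simpa using this
  rw [← hrange] at hmem
  obtain ⟨y, hy⟩ := hmem
  refine ⟨WithLp.equiv 2 (Fin n → ℝ) y, ?_⟩
  have : WithLp.equiv 2 (Fin n → ℝ) (T y) = L *ᵥ WithLp.equiv 2 (Fin n → ℝ) y :=
    Matrix.ofLp_toEuclideanLin_apply L y
  rw [hy] at this
  rw [← this]
  rfl

end MTFA

namespace MTFA

/-- If `L` is PSD and every kernel vector vanishes at `i`, then we can subtract a small
positive multiple of `diagonal (Pi.single i 1)` and stay PSD. -/
lemma sub_diag_psd {L : Matrix (Fin n) (Fin n) ℝ} (hL : L.PosSemidef) (i : Fin n)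
    (h : ∀ v, L *ᵥ v = 0 → v i = 0) :
    ∃ t : ℝ, 0 < t ∧ (L - Matrix.diagonal (Pi.single i t)).PosSemidef := by
  obtain ⟨w, hw⟩ := exists_mulVec_eq_single hL.1 i h
  have hwi : w ⬝ᵥ L *ᵥ w = w i := by
    rw [hw, dotProduct_single, mul_one]
  have hwnn : 0 ≤ w i := by rw [← hwi]; exact psd_nonneg hL w
  have hwpos : 0 < w i := by
    rcases hwnn.lt_or_eq with hlt | heq
    · exact hlt
    · exfalso
      have h0 : L *ᵥ w = 0 := by
        rw [← hL.dotProduct_mulVec_zero_iff w]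
        simp only [star_trivial]
        rw [hwi, ← heq]
      rw [hw] at h0
      have := congrFun h0 i
      simp at this
  refine ⟨1 / w i, by positivity, Matrix.PosSemidef.of_dotProduct_mulVec_nonneg ?_ ?_⟩
  · -- Hermitian
    have h1 : (Matrix.diagonal (Pi.single i (1 / w i))).IsHermitian := Matrix.isHermitian_diagonal _
    exact hL.1.sub h1
  · intro v
    have hkey : (v i) ^ 2 ≤ (w i) * (v ⬝ᵥ L *ᵥ v) := by
      have hcs := cs hL v w
      have : w ⬝ᵥ L *ᵥ v = v i := by
        rw [mulVec_dot hL.1, hw, single_dotProduct, one_mul]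
      rw [this, hwi] at hcs
      exact hcs
    have hquad : star v ⬝ᵥ (L - Matrix.diagonal (Pi.single i (1 / w i))) *ᵥ v
        = v ⬝ᵥ L *ᵥ v - (1 / w i) * (v i * v i) := by
      simp only [star_trivial, Matrix.sub_mulVec, dotProduct_sub]
      congr 1
      simp only [dotProduct, Matrix.mulVec_diagonal, Pi.single_apply]
      rw [Finset.sum_eq_single i]
      · simp; ring
      · intro b _ hb; simp [hb]
      · intro hb; simp at hb
    rw [hquad, sub_nonneg]
    rw [div_mul_eq_mul_div, div_le_iff₀ hwpos]
    nlinarith [hkey]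

end MTFA

namespace MTFA

lemma psd_diag_nonneg {L : Matrix (Fin n) (Fin n) ℝ} (hL : L.PosSemidef) (i : Fin n) :
    0 ≤ L i i := by
  have := psd_nonneg hL (Pi.single i 1)
  simpa [Matrix.mulVec_single, single_dotProduct] using this

lemma psd_trace_nonneg {L : Matrix (Fin n) (Fin n) ℝ} (hL : L.PosSemidef) :
    0 ≤ L.trace := by
  rw [Matrix.trace]
  exact Finset.sum_nonneg fun i _ => psd_diag_nonneg hL i

lemma quad_pair (L : Matrix (Fin n) (Fin n) ℝ) (i j : Fin n) (a b : ℝ) :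
    (Pi.single i a + Pi.single j b) ⬝ᵥ L *ᵥ (Pi.single i a + Pi.single j b)
      = a * (L i i * a) + a * (L i j * b) + (b * (L j i * a) + b * (L j j * b)) := by
  simp [Matrix.mulVec_add, dotProduct_add, add_dotProduct,
    Matrix.mulVec_single, single_dotProduct]
  ring

lemma entry_bound {L : Matrix (Fin n) (Fin n) ℝ} (hL : L.PosSemidef) {c : ℝ}
    (hc : L.trace ≤ c) (i j : Fin n) : L i j ∈ Set.Icc (-c) c := by
  have hdiag : ∀ k : Fin n, L k k ≤ c := by
    intro k
    calc L k k ≤ L.trace := by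
          rw [Matrix.trace]
          exact Finset.single_le_sum (f := fun k => L k k)
            (fun l _ => psd_diag_nonneg hL l) (Finset.mem_univ k)
      _ ≤ c := hc
  rcases eq_or_ne i j with rfl | hij
  · exact ⟨le_trans (by linarith [psd_trace_nonneg hL, hc]) (psd_diag_nonneg hL i), hdiag i⟩
  · have hsum : L i i + L j j ≤ c := by
      have : ∑ k ∈ ({i, j} : Finset (Fin n)), L k k ≤ ∑ k ∈ Finset.univ, L k k :=
        Finset.sum_le_sum_of_subset_of_nonneg (Finset.subset_univ _)
          (fun k _ _ => psd_diag_nonneg hL k)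
      rw [Finset.sum_pair hij] at this
      exact le_trans this hc
    have h1 := psd_nonneg hL (Pi.single i 1 + Pi.single j 1)
    have h2 := psd_nonneg hL (Pi.single i 1 + Pi.single j (-1))
    rw [quad_pair] at h1 h2
    have hsym : L j i = L i j := by
      have := congrFun (congrFun hL.1.eq j) i
      simpa using this.symm
    have hc0 : 0 ≤ c := le_trans (psd_trace_nonneg hL) hc
    constructor <;> nlinarith [h1, h2, hsum, hc0, hsym]

lemma exists_opt (X : Matrix (Fin n) (Fin n) ℝ)
    (hfeas : ∃ L0 : Matrix (Fin n) (Fin n) ℝ, L0.PosSemidef ∧ (X - L0).IsDiag) :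
    ∃ L : Matrix (Fin n) (Fin n) ℝ, (L.PosSemidef ∧ (X - L).IsDiag) ∧
      ∀ L' : Matrix (Fin n) (Fin n) ℝ, L'.PosSemidef → (X - L').IsDiag →
        L.trace ≤ L'.trace := by
  obtain ⟨L0, hL0, hD0⟩ := hfeas
  set c := L0.trace with hc
  set S : Set (Matrix (Fin n) (Fin n) ℝ) :=
    {L | L.PosSemidef ∧ (X - L).IsDiag ∧ L.trace ≤ c} with hS
  have hne : L0 ∈ S := ⟨hL0, hD0, le_refl _⟩
  have hclosed : IsClosed S := by
    have h1 : IsClosed {L : Matrix (Fin n) (Fin n) ℝ | L.IsHermitian} := by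
      have : {L : Matrix (Fin n) (Fin n) ℝ | L.IsHermitian}
          = {L : Matrix (Fin n) (Fin n) ℝ | Lᴴ = L} := rfl
      rw [this]
      exact isClosed_eq (continuous_id.matrix_conjTranspose) continuous_id
    have h2 : IsClosed {L : Matrix (Fin n) (Fin n) ℝ |
        ∀ x : Fin n → ℝ, 0 ≤ star x ⬝ᵥ L *ᵥ x} := by
      have : {L : Matrix (Fin n) (Fin n) ℝ | ∀ x : Fin n → ℝ, 0 ≤ star x ⬝ᵥ L *ᵥ x}
          = ⋂ x : Fin n → ℝ, {L : Matrix (Fin n) (Fin n) ℝ | 0 ≤ star x ⬝ᵥ L *ᵥ x} := by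
        ext L; simp [Set.mem_iInter]
      rw [this]
      refine isClosed_iInter fun x => isClosed_le continuous_const ?_
      exact continuous_const.dotProduct (continuous_id.matrix_mulVec continuous_const)
    have h3 : IsClosed {L : Matrix (Fin n) (Fin n) ℝ | (X - L).IsDiag} := by
      have : {L : Matrix (Fin n) (Fin n) ℝ | (X - L).IsDiag}
          = ⋂ i : Fin n, ⋂ j : Fin n,
            {L : Matrix (Fin n) (Fin n) ℝ | i ≠ j → X i j - L i j = 0} := by
        ext L
        simp only [Set.mem_iInter, Set.mem_setOf_eq]
        exact ⟨fun h i j hij => h hij, fun h i j hij => h i j hij⟩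
      rw [this]
      refine isClosed_iInter fun i => isClosed_iInter fun j => ?_
      rcases eq_or_ne i j with rfl | hij
      · simp
      · have : {L : Matrix (Fin n) (Fin n) ℝ | i ≠ j → X i j - L i j = 0}
            = {L : Matrix (Fin n) (Fin n) ℝ | X i j - L i j = 0} := by
          ext L; simp [hij]
        rw [this]
        exact isClosed_eq (continuous_const.sub (continuous_id.matrix_elem i j))
          continuous_const
    have h4 : IsClosed {L : Matrix (Fin n) (Fin n) ℝ | L.trace ≤ c} :=
      isClosed_le (continuous_id.matrix_trace) continuous_const
    have : S = ({L : Matrix (Fin n) (Fin n) ℝ | L.IsHermitian}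
        ∩ {L | ∀ x : Fin n → ℝ, 0 ≤ star x ⬝ᵥ L *ᵥ x})
        ∩ ({L : Matrix (Fin n) (Fin n) ℝ | (X - L).IsDiag}
        ∩ {L : Matrix (Fin n) (Fin n) ℝ | L.trace ≤ c}) := by
      ext L
      simp only [hS, Set.mem_setOf_eq, Set.mem_inter_iff, Matrix.posSemidef_iff_dotProduct_mulVec]
      try tauto
    rw [this]
    exact ((h1.inter h2).inter (h3.inter h4))
  have hBc : IsCompact ((Set.univ.pi fun _ : Fin n => Set.univ.pi
      fun _ : Fin n => Set.Icc (-c) c) : Set (Matrix (Fin n) (Fin n) ℝ)) :=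
    isCompact_univ_pi fun _ => isCompact_univ_pi fun _ => isCompact_Icc
  have hsub : S ⊆ ((Set.univ.pi fun _ : Fin n => Set.univ.pi
      fun _ : Fin n => Set.Icc (-c) c) : Set (Matrix (Fin n) (Fin n) ℝ)) := by
    rintro L ⟨hL, _, htr⟩
    exact Set.mem_univ_pi.mpr fun i => Set.mem_univ_pi.mpr fun j => entry_bound hL htr i j
  have hcomp : IsCompact S := hBc.of_isClosed_subset hclosed hsub
  obtain ⟨Lopt, hmem, hminon⟩ := hcomp.exists_isMinOn ⟨L0, hne⟩
    (continuous_id.matrix_trace).continuousOn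
  refine ⟨Lopt, ⟨hmem.1, hmem.2.1⟩, ?_⟩
  intro L' hL' hD'
  rcases le_or_gt L'.trace c with hle | hlt
  · exact isMinOn_iff.mp hminon L' ⟨hL', hD', hle⟩
  · exact le_trans hmem.2.2 hlt.le

end MTFA

namespace MTFA

lemma smul_psd {L : Matrix (Fin n) (Fin n) ℝ} (hL : L.PosSemidef) {c : ℝ} (hc : 0 ≤ c) :
    (c • L).PosSemidef := by
  apply Matrix.PosSemidef.of_dotProduct_mulVec_nonneg
  · show (c • L)ᴴ = c • L
    rw [Matrix.conjTranspose_smul, hL.1.eq]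
    simp
  · intro x
    have : star x ⬝ᵥ (c • L) *ᵥ x = c * (star x ⬝ᵥ L *ᵥ x) := by
      rw [Matrix.smul_mulVec]
      simp
    rw [this]
    exact mul_nonneg hc (hL.dotProduct_mulVec_nonneg x)

lemma opt_unique {X L1 L2 : Matrix (Fin n) (Fin n) ℝ}
    (h1 : L1.PosSemidef) (hd1 : (X - L1).IsDiag)
    (h2 : L2.PosSemidef) (hd2 : (X - L2).IsDiag)
    (hmin : ∀ L' : Matrix (Fin n) (Fin n) ℝ, L'.PosSemidef → (X - L').IsDiag →
      L1.trace ≤ L'.trace)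
    (htr : L1.trace = L2.trace) :
    L1 = L2 := by
  set M : Matrix (Fin n) (Fin n) ℝ := (1/2 : ℝ) • (L1 + L2) with hM
  have hMpsd : M.PosSemidef := smul_psd (h1.add h2) (by norm_num)
  have hMdiag : (X - M).IsDiag := by
    have hXM : X - M = (1/2 : ℝ) • ((X - L1) + (X - L2)) := by
      ext i j
      simp [hM, Matrix.sub_apply, Matrix.add_apply, Matrix.smul_apply]
      ring
    rw [hXM]
    exact (hd1.add hd2).smul _
  have hMtr : M.trace = L1.trace := by
    rw [hM, Matrix.trace_smul, Matrix.trace_add, ← htr]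
    simp [smul_eq_mul]
    ring
  have key : ∀ i : Fin n, L1 i i = L2 i i := by
    intro i
    by_contra hne
    have hA : ¬ (∀ v, M *ᵥ v = 0 → v i = 0) := by
      intro hall
      obtain ⟨t, ht, hpsd⟩ := sub_diag_psd hMpsd i hall
      have hfeas' : (X - (M - Matrix.diagonal (Pi.single i t))).IsDiag := by
        have hre : X - (M - Matrix.diagonal (Pi.single i t))
            = (X - M) + Matrix.diagonal (Pi.single i t) := by abel
        rw [hre]
        exact hMdiag.add (Matrix.isDiag_diagonal _)
      have hle := hmin _ hpsd hfeas'
      rw [Matrix.trace_sub, hMtr, Matrix.trace_diagonal] at hle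
      have hsum : ∑ k, Pi.single i t k = t := by simp
      rw [hsum] at hle
      linarith
    push_neg at hA
    obtain ⟨v, hv0, hvi⟩ := hA
    have hq : v ⬝ᵥ M *ᵥ v = 0 := by rw [hv0, dotProduct_zero]
    have hq12 : v ⬝ᵥ L1 *ᵥ v + v ⬝ᵥ L2 *ᵥ v = 0 := by
      have hexp : v ⬝ᵥ M *ᵥ v = (1/2) * (v ⬝ᵥ L1 *ᵥ v + v ⬝ᵥ L2 *ᵥ v) := by
        rw [hM, Matrix.smul_mulVec, Matrix.add_mulVec]
        simp [dotProduct_add, dotProduct_smul]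
        ring
      rw [hexp] at hq
      linarith
    have hz1 : L1 *ᵥ v = 0 := by
      rw [← h1.dotProduct_mulVec_zero_iff]
      simp only [star_trivial]
      linarith [psd_nonneg h1 v, psd_nonneg h2 v]
    have hz2 : L2 *ᵥ v = 0 := by
      rw [← h2.dotProduct_mulVec_zero_iff]
      simp only [star_trivial]
      linarith [psd_nonneg h1 v, psd_nonneg h2 v]
    have hΔ : (L1 - L2) *ᵥ v = 0 := by
      rw [Matrix.sub_mulVec, hz1, hz2, sub_zero]
    have hdiagΔ : (L1 - L2).IsDiag := by
      have hre : L1 - L2 = (X - L2) - (X - L1) := by abel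
      rw [hre]
      exact hd2.sub hd1
    have hval := congrFun hΔ i
    have hexp : ((L1 - L2) *ᵥ v) i = (L1 i i - L2 i i) * v i := by
      show (L1 - L2) i ⬝ᵥ v = _
      rw [dotProduct]
      rw [Finset.sum_eq_single i]
      · simp
      · intro b _ hb
        have hz : (L1 - L2) i b = 0 := hdiagΔ (Ne.symm hb)
        rw [hz, zero_mul]
      · intro h; exact absurd (Finset.mem_univ i) h
    rw [hexp] at hval
    simp only [Pi.zero_apply] at hval
    rcases mul_eq_zero.mp hval with h | h
    · exact hne (by linarith [sub_eq_zero.mp h])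
    · exact hvi h
  ext i j
  rcases eq_or_ne i j with rfl | hij
  · exact key i
  · have e1 := hd1 hij
    have e2 := hd2 hij
    simp only [Matrix.sub_apply] at e1 e2
    linarith

end MTFA

/-- If MTFA (minimize tr(L) subject to X = D + L, L PSD, D diagonal) is
feasible for a symmetric matrix X, then it has a unique optimal solution. -/
theorem mtfa_unique_optimum (n : ℕ) (X : Matrix (Fin n) (Fin n) ℝ) (hX : X.IsSymm)
    (hfeas : ∃ D L : Matrix (Fin n) (Fin n) ℝ, D.IsDiag ∧ L.PosSemidef ∧ X = D + L) :
    ∃! DL : Matrix (Fin n) (Fin n) ℝ × Matrix (Fin n) (Fin n) ℝ,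
      (DL.1.IsDiag ∧ DL.2.PosSemidef ∧ X = DL.1 + DL.2) ∧
      (∀ D' L' : Matrix (Fin n) (Fin n) ℝ, D'.IsDiag → L'.PosSemidef → X = D' + L' →
        DL.2.trace ≤ L'.trace) := by
  obtain ⟨D0, L0, hD0, hL0, hX0⟩ := hfeas
  have hfeas' : ∃ L0' : Matrix (Fin n) (Fin n) ℝ, L0'.PosSemidef ∧ (X - L0').IsDiag := by
    refine ⟨L0, hL0, ?_⟩
    have : X - L0 = D0 := by rw [hX0]; abel
    rw [this]; exact hD0
  obtain ⟨L, ⟨hLpsd, hLdiag⟩, hmin⟩ := MTFA.exists_opt X hfeas'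
  have hXsplit : X = (X - L) + L := by abel
  refine ⟨(X - L, L), ⟨⟨hLdiag, hLpsd, hXsplit⟩, ?_⟩, ?_⟩
  · intro D' L' hD' hL' hX'
    refine hmin L' hL' ?_
    have : X - L' = D' := by rw [hX']; abel
    rw [this]; exact hD'
  · rintro ⟨D', L'⟩ ⟨⟨hD', hL', hX'⟩, hmin'⟩
    simp only at hD' hL' hX' hmin' ⊢
    have hdiag' : (X - L').IsDiag := by
      have : X - L' = D' := by rw [hX']; abel
      rw [this]; exact hD'
    have htr : L'.trace = L.trace := by
      refine le_antisymm (hmin' (X - L) L hLdiag hLpsd hXsplit) ?_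
      exact hmin L' hL' hdiag'
    have hmin'' : ∀ L'' : Matrix (Fin n) (Fin n) ℝ, L''.PosSemidef → (X - L'').IsDiag →
        L'.trace ≤ L''.trace := by
      intro L'' hpsd hdg
      exact hmin' (X - L'') L'' hdg hpsd (by abel)
    have hLL : L' = L := MTFA.opt_unique hL' hdiag' hLpsd hLdiag hmin'' htr
    have hDD : D' = X - L := by
      rw [← hLL, hX']; abel
    rw [Prod.mk.injEq]
    exact ⟨hDD, hLL⟩
end

section
/- A subspace U of R^n is realizable (i.e., there exists an n×n positive semidefinite matrix Y with unit diagonal whose nullspace contains U) if and only if the orthogonal complement U^⊥ has the ellipsoid fitting property (i.e., there exists k and a k×n matrix V with row space U^⊥ and a positive semidefinite k×k matrix M such that v_i^T M v_i = 1 for every column v_i of V). -/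
open Matrix

/-- A subspace `U ⊆ ℝⁿ` is realizable if some correlation matrix (PSD with unit diagonal)
has nullspace containing `U`. -/
def Realizable {n : ℕ} (U : Submodule ℝ (EuclideanSpace ℝ (Fin n))) : Prop :=
  ∃ Y : Matrix (Fin n) (Fin n) ℝ, Y.PosSemidef ∧ (∀ i, Y i i = 1) ∧ ∀ u ∈ U, Y.mulVec u = 0

/-- `U` is realizable iff `Uᗮ` has the ellipsoid fitting property. -/
theorem realizable_iff_ellipsoid_fitting (n : ℕ) (U : Submodule ℝ (EuclideanSpace ℝ (Fin n))) :
    Realizable U ↔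
      ∃ (k : ℕ) (V : Matrix (Fin k) (Fin n) ℝ) (M : Matrix (Fin k) (Fin k) ℝ),
        Submodule.span ℝ (Set.range V) = Uᗮ.map (WithLp.linearEquiv 2 ℝ (Fin n → ℝ)).toLinearMap ∧ M.PosSemidef ∧
        ∀ i : Fin n, (fun l => V l i) ⬝ᵥ M.mulVec (fun l => V l i) = 1 := by
  constructor
  · rintro ⟨Y, hY, hdiag, hnull⟩
    open MatrixOrder in obtain ⟨B, hB⟩ := CStarAlgebra.nonneg_iff_eq_star_mul_self.mp hY.nonneg
    rw [star_eq_conjTranspose] at hB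
    -- rows of B are orthogonal to U
    have hBu : ∀ u ∈ U, B.mulVec u = 0 := by
      intro u hu
      have h0 : (B *ᵥ u) ⬝ᵥ (B *ᵥ u) = 0 := by
        have hY0 : Y *ᵥ (u : Fin n → ℝ) = 0 := hnull u hu
        have : (B *ᵥ (u : Fin n → ℝ)) ⬝ᵥ (B *ᵥ u) = u ⬝ᵥ ((Bᴴ * B) *ᵥ u) := by
          rw [← Matrix.mulVec_mulVec, Matrix.dotProduct_mulVec u, Matrix.vecMul_conjTranspose]
          simp
        rw [this, ← hB, hY0]
        simp
      funext a
      have := Finset.sum_eq_zero_iff_of_nonneg (fun i _ => mul_self_nonneg ((B *ᵥ u) i)) |>.mp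
        (by simpa [dotProduct] using h0) a (Finset.mem_univ a)
      simpa [mul_self_eq_zero] using this
    -- the projection rows
    set W : Fin n → EuclideanSpace ℝ (Fin n) :=
      fun i => (Uᗮ.orthogonalProjectionOnto (EuclideanSpace.single i 1) : EuclideanSpace ℝ (Fin n))
      with hW
    refine ⟨n + n, (Fin.addCases (fun i => B i) (fun i => (W i : Fin n → ℝ)) : Matrix (Fin (n+n)) (Fin n) ℝ),
      (fun a b => if (a : ℕ) < n ∧ a = b then (1:ℝ) else 0 : Matrix (Fin (n+n)) (Fin (n+n)) ℝ), ?_, ?_, ?_⟩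
    · -- span = Uᗮ
      apply le_antisymm
      · rw [Submodule.span_le]
        rintro _ ⟨a, rfl⟩
        refine Fin.addCases (motive := fun a =>
          ((Fin.addCases (fun i => B i) (fun i => (W i : Fin n → ℝ)) : Matrix (Fin (n+n)) (Fin n) ℝ)) a ∈
            ((Uᗮ.map (WithLp.linearEquiv 2 ℝ (Fin n → ℝ)).toLinearMap : Submodule ℝ (Fin n → ℝ)) : Set (Fin n → ℝ))) ?_ ?_ a
        · intro i
          simp only [Fin.addCases_left]
          refine ⟨WithLp.toLp 2 (B i), ?_, rfl⟩
          intro u hu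
          have h := congrFun (hBu u hu) i
          simp only [Matrix.mulVec, dotProduct] at h
          rw [PiLp.inner_apply]
          simpa [mul_comm] using h
        · intro i
          simp only [Fin.addCases_right]
          exact ⟨W i, SetLike.coe_mem _, rfl⟩
      · intro v' hv'
        obtain ⟨v, hv, rfl⟩ := hv'
        have h1 : ((Uᗮ.orthogonalProjectionOnto) v : EuclideanSpace ℝ (Fin n)) = v :=
          Submodule.starProjection_eq_self_iff.mpr hv
        have h2 : ∑ i, v i • (EuclideanSpace.single i (1:ℝ)) = v := by
          simpa [EuclideanSpace.basisFun_repr, EuclideanSpace.basisFun_apply] using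
            (EuclideanSpace.basisFun (Fin n) ℝ).sum_repr v
        have hvrep : v = ∑ i, v i • (W i : EuclideanSpace ℝ (Fin n)) := by
          conv_lhs => rw [← h1, ← h2]
          rw [map_sum]
          simp [hW, _root_.map_smul]
        rw [hvrep, LinearEquiv.coe_toLinearMap, map_sum]
        refine Submodule.sum_mem _ fun i _ => ?_
        rw [map_smul]
        refine Submodule.smul_mem _ _ (Submodule.subset_span ?_)
        exact ⟨Fin.natAdd n i, Fin.addCases_right i⟩
    · -- M PSD
      refine Matrix.PosSemidef.of_dotProduct_mulVec_nonneg ?_ ?_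
      · refine Matrix.IsHermitian.ext fun a b => ?_
        simp only [Matrix.conjTranspose_apply, Matrix.of_apply, star_trivial]
        by_cases h : a = b
        · subst h; rfl
        · simp [h, Ne.symm h]
      · intro x
        simp only [Matrix.mulVec, dotProduct, Matrix.of_apply, Pi.star_apply, star_trivial]
        refine Finset.sum_nonneg fun a _ => ?_
        have : ∑ b, (if (a:ℕ) < n ∧ a = b then (1:ℝ) else 0) * x b
            = if (a:ℕ) < n then x a else 0 := by
          by_cases h : (a:ℕ) < n
          · simp [h, Finset.sum_ite_eq]
          · simp [h]
        rw [this]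
        by_cases h : (a:ℕ) < n
        · simp only [h, if_true]; exact mul_self_nonneg _
        · simp [h]
    · -- quadratic = 1
      intro i
      simp only [Matrix.mulVec, dotProduct, Matrix.of_apply]
      have key : ∀ a : Fin (n+n), ∑ b, (if (a:ℕ) < n ∧ a = b then (1:ℝ) else 0) *
          ((Fin.addCases (fun i => B i) (fun i => (W i : Fin n → ℝ)) : Matrix (Fin (n+n)) (Fin n) ℝ)) b i
          = if (a:ℕ) < n then ((Fin.addCases (fun i => B i) (fun i => (W i : Fin n → ℝ)) : Matrix (Fin (n+n)) (Fin n) ℝ)) a i else 0 := by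
        intro a
        by_cases h : (a:ℕ) < n
        · simp [h, Finset.sum_ite_eq]
        · simp [h]
      calc ∑ a, ((Fin.addCases (fun i => B i) (fun i => (W i : Fin n → ℝ)) : Matrix (Fin (n+n)) (Fin n) ℝ)) a i *
            ∑ b, (if (a:ℕ) < n ∧ a = b then (1:ℝ) else 0) *
              ((Fin.addCases (fun i => B i) (fun i => (W i : Fin n → ℝ)) : Matrix (Fin (n+n)) (Fin n) ℝ)) b i
          = ∑ a : Fin n, B a i * B a i := by
            simp only [key]
            rw [Fin.sum_univ_add]
            have h1 : ∀ a : Fin n, ((Fin.castAdd n a : Fin (n+n)) : ℕ) < n := fun a => a.2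
            have h2 : ∀ a : Fin n, ¬ ((Fin.natAdd n a : Fin (n+n)) : ℕ) < n := by
              intro a; simp [Fin.natAdd]
            simp [h1, h2, Fin.addCases_left]
        _ = Y i i := by
            rw [hB]; simp [Matrix.mul_apply, Matrix.conjTranspose_apply]
        _ = 1 := hdiag i
  · rintro ⟨k, V, M, hspan, hM, hquad⟩
    refine ⟨Vᴴ * M * V, hM.conjTranspose_mul_mul_same V, ?_, ?_⟩
    · intro i
      have hq := hquad i
      simp only [Matrix.mulVec, dotProduct] at hq
      rw [← hq]
      simp only [Matrix.mul_apply, Matrix.conjTranspose_apply, star_trivial,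
        Finset.sum_mul, Finset.mul_sum]
      rw [Finset.sum_comm]
      congr 1; ext l; congr 1; ext m; ring
    · intro u hu
      have hVu : V *ᵥ (u : Fin n → ℝ) = 0 := by
        funext l
        have hrow : WithLp.toLp 2 (V l) ∈ Uᗮ := by
          have hmem : V l ∈ Uᗮ.map (WithLp.linearEquiv 2 ℝ (Fin n → ℝ)).toLinearMap := by
            rw [← hspan]; exact Submodule.subset_span (Set.mem_range_self l)
          obtain ⟨w, hw, hwe⟩ := hmem
          rw [← hwe]; simpa using hw
        have h := hrow u hu
        rw [PiLp.inner_apply] at h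
        simpa [Matrix.mulVec, dotProduct, mul_comm] using h
      show (Vᴴ * M * V) *ᵥ (u : Fin n → ℝ) = 0
      rw [← Matrix.mulVec_mulVec, hVu]
      simp
end

section
/- If V is a k×n real matrix with row space V and there is a centered ellipsoid passing through all columns of V (i.e., a positive semidefinite M with v_i^T M v_i = 1 for all columns v_i), then for any matrix W with the same row space V, there is a centered ellipsoid passing through all columns of W. -/
open Matrix

/-- if a centered ellipsoid passes through the columns of `V`, then a centered
ellipsoid passes through the columns of any matrix `W` with the same row space. -/
theorem ellipsoid_fitting_depends_only_on_rowspace (n k m : ℕ)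
    (V : Matrix (Fin k) (Fin n) ℝ) (W : Matrix (Fin m) (Fin n) ℝ)
    (hrow : Submodule.span ℝ (Set.range V) = Submodule.span ℝ (Set.range W))
    (hV : ∃ M : Matrix (Fin k) (Fin k) ℝ, M.PosSemidef ∧
      ∀ i : Fin n, (fun l => V l i) ⬝ᵥ M.mulVec (fun l => V l i) = 1) :
    ∃ M' : Matrix (Fin m) (Fin m) ℝ, M'.PosSemidef ∧
      ∀ i : Fin n, (fun l => W l i) ⬝ᵥ M'.mulVec (fun l => W l i) = 1 := by
  obtain ⟨M, hM, hquad⟩ := hV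
  -- each row of V lies in the span of rows of W
  have hmem : ∀ l : Fin k, V l ∈ Submodule.span ℝ (Set.range W) := by
    intro l
    rw [← hrow]
    exact Submodule.subset_span ⟨l, rfl⟩
  choose c hc using fun l => (Submodule.mem_span_range_iff_exists_fun ℝ).mp (hmem l)
  set A : Matrix (Fin k) (Fin m) ℝ := fun l j => c l j with hA
  have hVW : V = A * W := by
    ext l i
    have := congrFun (hc l) i
    simp only [Finset.sum_apply, Pi.smul_apply, smul_eq_mul] at this
    rw [← this]
    simp [Matrix.mul_apply, hA]
    rfl
  refine ⟨Aᵀ * M * A, ?_, ?_⟩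
  · have := hM.conjTranspose_mul_mul_same A
    simpa using this
  · intro i
    have hcol : (fun l => V l i) = A.mulVec (fun j => W j i) := by
      funext l
      simp [hVW, Matrix.mul_apply, Matrix.mulVec, dotProduct]
    have := hquad i
    rw [hcol] at this
    rw [← this]
    rw [← Matrix.mulVec_mulVec, ← Matrix.mulVec_mulVec, Matrix.dotProduct_mulVec,
      Matrix.vecMul_transpose]
end

section
/- A subspace U of R^n is not realizable if and only if there exists a diagonal matrix D with tr(D) > 0 such that v^T D v ≤ 0 for all v in U^⊥. -/
open Matrix

namespace CertAux

open Filter Topology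

variable {n : ℕ}

/-- The set of diagonals of PSD matrices whose nullspace contains `U`. -/
def S (U : Submodule ℝ (EuclideanSpace ℝ (Fin n))) : Set (EuclideanSpace ℝ (Fin n)) :=
  {x | ∃ Y : Matrix (Fin n) (Fin n) ℝ, Y.PosSemidef ∧ (∀ u ∈ U, Y.mulVec u = 0) ∧ ∀ i, Y i i = x i}

lemma psd_smul {Y : Matrix (Fin n) (Fin n) ℝ} (hY : Y.PosSemidef) {c : ℝ} (hc : 0 ≤ c) :
    (c • Y).PosSemidef := by
  refine Matrix.PosSemidef.of_dotProduct_mulVec_nonneg ?_ fun x => ?_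
  · show (c • Y)ᴴ = c • Y
    rw [conjTranspose_smul, star_trivial, hY.1]
  · rw [smul_mulVec, dotProduct_smul, smul_eq_mul]
    exact mul_nonneg hc (hY.dotProduct_mulVec_nonneg x)

lemma zero_mem_S (U : Submodule ℝ (EuclideanSpace ℝ (Fin n))) : (0 : EuclideanSpace ℝ (Fin n)) ∈ S U :=
  ⟨0, Matrix.PosSemidef.zero, by simp, by simp⟩

lemma smul_mem_S {U : Submodule ℝ (EuclideanSpace ℝ (Fin n))} {x : EuclideanSpace ℝ (Fin n)}
    (hx : x ∈ S U) {c : ℝ} (hc : 0 ≤ c) : c • x ∈ S U := by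
  obtain ⟨Y, hY, hker, hdiag⟩ := hx
  refine ⟨c • Y, psd_smul hY hc, fun u hu => by rw [smul_mulVec, hker u hu, smul_zero],
    fun i => ?_⟩
  rw [Matrix.smul_apply, hdiag i, PiLp.smul_apply, smul_eq_mul]

lemma convex_S (U : Submodule ℝ (EuclideanSpace ℝ (Fin n))) : Convex ℝ (S U) := by
  intro x hx y hy a b ha hb _
  obtain ⟨Y, hY, hkerY, hdY⟩ := hx
  obtain ⟨Z, hZ, hkerZ, hdZ⟩ := hy
  refine ⟨a • Y + b • Z, (psd_smul hY ha).add (psd_smul hZ hb), fun u hu => ?_, fun i => ?_⟩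
  · rw [add_mulVec, smul_mulVec, smul_mulVec, hkerY u hu, hkerZ u hu, smul_zero,
      smul_zero, add_zero]
  · rw [Matrix.add_apply, Matrix.smul_apply, Matrix.smul_apply, hdY i, hdZ i,
      PiLp.add_apply, PiLp.smul_apply, PiLp.smul_apply, smul_eq_mul]

lemma quad_eq (Y : Matrix (Fin n) (Fin n) ℝ) (x : Fin n → ℝ) :
    star x ⬝ᵥ Y *ᵥ x = ∑ i, x i * ∑ j, Y i j * x j := by
  simp [dotProduct, mulVec]

lemma diag_nonneg {Y : Matrix (Fin n) (Fin n) ℝ} (hY : Y.PosSemidef) (i : Fin n) :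
    0 ≤ Y i i := by
  have := hY.dotProduct_mulVec_nonneg (Pi.single i 1)
  rw [star_trivial, mulVec_single, single_dotProduct, one_mul] at this
  simpa using this

lemma entry_bound {Y : Matrix (Fin n) (Fin n) ℝ} (hY : Y.PosSemidef) (i j : Fin n) :
    |Y i j| ≤ ∑ l, Y l l := by
  by_cases hij : i = j
  · subst hij
    rw [abs_of_nonneg (diag_nonneg hY i)]
    exact Finset.single_le_sum (fun l _ => diag_nonneg hY l) (Finset.mem_univ i)
  · have hsym : Y j i = Y i j := by rw [← hY.1.apply i j, star_trivial]
    have h1 := hY.dotProduct_mulVec_nonneg (Pi.single i 1 + Pi.single j 1)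
    have h2 := hY.dotProduct_mulVec_nonneg (Pi.single i 1 - Pi.single j 1)
    rw [star_trivial, mulVec_add, dotProduct_add, add_dotProduct, add_dotProduct,
      single_dotProduct, single_dotProduct, single_dotProduct, single_dotProduct,
      mulVec_single, mulVec_single] at h1
    rw [star_trivial, mulVec_sub, dotProduct_sub, sub_dotProduct, sub_dotProduct,
      single_dotProduct, single_dotProduct, single_dotProduct, single_dotProduct,
      mulVec_single, mulVec_single] at h2
    simp only [one_mul, mul_one, Pi.smul_apply, op_smul_eq_mul, Matrix.col_apply] at h1 h2
    have hpair : Y i i + Y j j ≤ ∑ l, Y l l := by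
      have : ∑ l ∈ ({i, j} : Finset (Fin n)), Y l l ≤ ∑ l, Y l l :=
        Finset.sum_le_sum_of_subset_of_nonneg (Finset.subset_univ _)
          (fun l _ _ => diag_nonneg hY l)
      rwa [Finset.sum_pair hij] at this
    rw [abs_le]
    constructor <;> [nlinarith [h2, hsym]; nlinarith [h1, hsym]]

lemma isClosed_S (U : Submodule ℝ (EuclideanSpace ℝ (Fin n))) : IsClosed (S U) := by
  rw [← isSeqClosed_iff_isClosed]
  intro y x hy hx
  choose Y hPSD hker hdiag using hy
  -- coordinate limits
  have hcoord : ∀ i : Fin n, Tendsto (fun k => y k i) atTop (𝓝 (x i)) :=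
    fun i => ((EuclideanSpace.proj i).continuous.tendsto x).comp hx
  -- bound on traces
  have htr : Tendsto (fun k => ∑ l, Y k l l) atTop (𝓝 (∑ l, x l)) := by
    have he : (fun k => ∑ l, Y k l l) = fun k => ∑ l, y k l := by
      funext k; exact Finset.sum_congr rfl fun l _ => hdiag k l
    rw [he]
    exact tendsto_finset_sum _ fun l _ => hcoord l
  obtain ⟨C, hC⟩ := htr.bddAbove_range
  have hbound : ∀ k i j, Y k i j ∈ Set.Icc (-C) C := by
    intro k i j
    have h1 : |Y k i j| ≤ C :=
      (entry_bound (hPSD k) i j).trans (hC (Set.mem_range_self k))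
    exact ⟨neg_le_of_abs_le h1, le_of_abs_le h1⟩
  -- compactness of the entrywise box
  have hKcpt : IsCompact {Z : Matrix (Fin n) (Fin n) ℝ | ∀ i j, Z i j ∈ Set.Icc (-C) C} := by
    have : {Z : Matrix (Fin n) (Fin n) ℝ | ∀ i j, Z i j ∈ Set.Icc (-C) C} =
        Set.pi Set.univ (fun _ : Fin n => Set.pi Set.univ fun _ : Fin n => Set.Icc (-C) C) := by
      ext Z
      constructor
      · intro h i _ j _; exact h i j
      · intro h i j; exact h i (Set.mem_univ i) j (Set.mem_univ j)
    rw [this]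
    exact isCompact_univ_pi fun _ => isCompact_univ_pi fun _ => isCompact_Icc
  haveI : FirstCountableTopology (Matrix (Fin n) (Fin n) ℝ) :=
    inferInstanceAs (FirstCountableTopology (Fin n → Fin n → ℝ))
  obtain ⟨Z, hZK, φ, hφ, hZ⟩ := hKcpt.tendsto_subseq fun k => hbound k
  have hent : ∀ i j, Tendsto (fun k => Y (φ k) i j) atTop (𝓝 (Z i j)) := by
    intro i j
    have h1 : Continuous fun W : Matrix (Fin n) (Fin n) ℝ => W i j :=
      (continuous_apply j).comp (continuous_apply i)
    exact (h1.tendsto Z).comp hZ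
  refine ⟨Z, Matrix.PosSemidef.of_dotProduct_mulVec_nonneg ?_ fun v => ?_, fun u hu => ?_, fun i => ?_⟩
  · -- Hermitian
    show Zᴴ = Z
    ext i j
    rw [conjTranspose_apply, star_trivial]
    refine tendsto_nhds_unique (hent j i) ?_
    have he : (fun k => Y (φ k) j i) = fun k => Y (φ k) i j := by
      funext k; rw [← (hPSD (φ k)).1.apply i j, star_trivial]
    rw [he]; exact hent i j
  · -- nonnegativity of quadratic form
    have hq : Tendsto (fun k => star v ⬝ᵥ Y (φ k) *ᵥ v) atTop (𝓝 (star v ⬝ᵥ Z *ᵥ v)) := by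
      have he : ∀ (W : Matrix (Fin n) (Fin n) ℝ), star v ⬝ᵥ W *ᵥ v = ∑ i, v i * ∑ j, W i j * v j := by
        intro W; simp [dotProduct, mulVec]
      simp only [he]
      exact tendsto_finset_sum _ fun i _ =>
        ((tendsto_finset_sum _ fun j _ => (hent i j).mul_const (v j)).const_mul (v i))
    exact ge_of_tendsto' hq fun k => (hPSD (φ k)).dotProduct_mulVec_nonneg v
  · -- kills U
    funext i
    have hlim : Tendsto (fun k => (Y (φ k) *ᵥ u) i) atTop (𝓝 ((Z *ᵥ u) i)) := by
      simp only [mulVec, dotProduct]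
      exact tendsto_finset_sum _ fun j _ => (hent i j).mul_const (u j)
    have hzero : (fun k => (Y (φ k) *ᵥ u) i) = fun _ => (0 : ℝ) := by
      funext k; rw [hker (φ k) u hu]; rfl
    rw [hzero] at hlim
    exact (tendsto_nhds_unique tendsto_const_nhds hlim).symm
  · -- diagonal
    refine tendsto_nhds_unique (hent i i) ?_
    have he : (fun k => Y (φ k) i i) = fun k => y (φ k) i := by
      funext k; exact hdiag (φ k) i
    rw [he]
    exact (hcoord i).comp hφ.tendsto_atTop

lemma psd_vecMulVec (v : Fin n → ℝ) : (vecMulVec v v).PosSemidef := by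
  refine Matrix.PosSemidef.of_dotProduct_mulVec_nonneg ?_ fun x => ?_
  · show (vecMulVec v v)ᴴ = vecMulVec v v
    ext i j
    simp [vecMulVec_apply, conjTranspose_apply, mul_comm]
  · have he : star x ⬝ᵥ (vecMulVec v v) *ᵥ x = (v ⬝ᵥ x) * (v ⬝ᵥ x) := by
      simp only [star_trivial, dotProduct, mulVec, vecMulVec_apply, Finset.sum_mul,
        Finset.mul_sum]
      rw [Finset.sum_comm]
      exact Finset.sum_congr rfl fun i _ => Finset.sum_congr rfl fun j _ => by ring
    rw [he]
    exact mul_self_nonneg _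

lemma sq_mem_S {U : Submodule ℝ (EuclideanSpace ℝ (Fin n))} {v : EuclideanSpace ℝ (Fin n)}
    (hv : v ∈ Uᗮ) : ((WithLp.equiv 2 (Fin n → ℝ)).symm fun i => v i * v i) ∈ S U := by
  refine ⟨vecMulVec v v, psd_vecMulVec v, fun u hu => ?_, fun i => rfl⟩
  have hvu : (v : Fin n → ℝ) ⬝ᵥ u = 0 := by
    have h := (Submodule.mem_orthogonal U v).mp hv u hu
    simp only [PiLp.inner_apply, RCLike.inner_apply, conj_trivial] at h
    simpa [dotProduct, mul_comm] using h
  funext i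
  simp only [mulVec, vecMulVec_apply, dotProduct, Pi.zero_apply]
  calc ∑ j, v i * v j * u j = v i * ∑ j, v j * u j := by rw [Finset.mul_sum]; exact Finset.sum_congr rfl fun j _ => by ring
  _ = 0 := by rw [show ∑ j, v j * u j = 0 from hvu]; ring

/-- The backward direction: a certificate rules out realizability. -/
lemma backward {n : ℕ} (U : Submodule ℝ (EuclideanSpace ℝ (Fin n)))
    (D : Matrix (Fin n) (Fin n) ℝ) (hD : D.IsDiag) (htr : 0 < D.trace)
    (hcert : ∀ v ∈ Uᗮ, v ⬝ᵥ D.mulVec v ≤ 0) : ¬ Realizable U := by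
  rintro ⟨Y, hY, hdiag, hker⟩
  obtain ⟨B, hB⟩ : ∃ B : Matrix (Fin n) (Fin n) ℝ, Y = Bᴴ * B := by
    open scoped MatrixOrder in
    obtain ⟨B, hB⟩ := CStarAlgebra.nonneg_iff_eq_star_mul_self.mp hY.nonneg
    exact ⟨B, hB⟩
  have hBu : ∀ u ∈ U, B *ᵥ (u : Fin n → ℝ) = 0 := by
    intro u hu
    have h0 : star (B *ᵥ (u : Fin n → ℝ)) ⬝ᵥ (B *ᵥ (u : Fin n → ℝ)) = 0 := by
      rw [star_mulVec, ← dotProduct_mulVec, mulVec_mulVec, ← hB, hker u hu, dotProduct_zero]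
    exact dotProduct_star_self_eq_zero.mp h0
  -- rows of B are in Uᗮ
  have hrow : ∀ k, ((WithLp.equiv 2 (Fin n → ℝ)).symm (B k)) ∈ Uᗮ := by
    intro k
    rw [Submodule.mem_orthogonal]
    intro u hu
    have h := congrFun (hBu u hu) k
    simp only [mulVec, dotProduct, Pi.zero_apply] at h
    simp only [PiLp.inner_apply, RCLike.inner_apply, conj_trivial, WithLp.equiv_symm_apply, PiLp.toLp_apply]
    rw [← h]
  have hsum : D.trace = ∑ k, ((WithLp.equiv 2 (Fin n → ℝ)).symm (B k) : Fin n → ℝ) ⬝ᵥ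
      D.mulVec ((WithLp.equiv 2 (Fin n → ℝ)).symm (B k)) := by
    have hYii : ∀ i, Y i i = ∑ k, B k i * B k i := by
      intro i
      rw [hB]
      simp [Matrix.mul_apply, conjTranspose_apply]
    have hDv : ∀ k, ((WithLp.equiv 2 (Fin n → ℝ)).symm (B k) : Fin n → ℝ) ⬝ᵥ
        D.mulVec ((WithLp.equiv 2 (Fin n → ℝ)).symm (B k)) = ∑ i, B k i * (D i i * B k i) := by
      intro k
      simp only [dotProduct, mulVec, WithLp.equiv_symm_apply, PiLp.toLp_apply]
      refine Finset.sum_congr rfl fun i _ => ?_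
      congr 1
      rw [Finset.sum_eq_single i]
      · intro j _ hj
        rw [hD (Ne.symm hj), zero_mul]
      · intro h; exact absurd (Finset.mem_univ i) h
    simp only [hDv]
    rw [Matrix.trace, Finset.sum_comm]
    refine Finset.sum_congr rfl fun i _ => ?_
    have h1 : ∑ k, B k i * (D i i * B k i) = D i i * ∑ k, B k i * B k i := by
      rw [Finset.mul_sum]; exact Finset.sum_congr rfl fun k _ => by ring
    rw [h1, ← hYii i, hdiag i, mul_one]
    rfl
  have hle : D.trace ≤ 0 := by
    rw [hsum]
    exact Finset.sum_nonpos fun k _ => hcert _ (hrow k)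
  exact absurd htr (not_lt.mpr hle)

lemma forward (U : Submodule ℝ (EuclideanSpace ℝ (Fin n))) (h : ¬ Realizable U) :
    ∃ D : Matrix (Fin n) (Fin n) ℝ, D.IsDiag ∧ 0 < D.trace ∧
      ∀ v ∈ Uᗮ, v ⬝ᵥ D.mulVec v ≤ 0 := by
  set ones : EuclideanSpace ℝ (Fin n) := (WithLp.equiv 2 (Fin n → ℝ)).symm fun _ => 1 with hones
  have hnotmem : ones ∉ S U := by
    rintro ⟨Y, hY, hker, hdiag⟩
    exact h ⟨Y, hY, fun i => hdiag i, hker⟩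
  obtain ⟨f, u0, hfb, hfx⟩ :=
    geometric_hahn_banach_closed_point (convex_S U) (isClosed_S U) hnotmem
  have hu0 : (0 : ℝ) < u0 := by
    have := hfb 0 (zero_mem_S U)
    rwa [map_zero] at this
  have hle : ∀ b ∈ S U, f b ≤ 0 := by
    intro b hb
    by_contra hpos
    push_neg at hpos
    have hmem := smul_mem_S hb (le_of_lt (div_pos hu0 hpos))
    have hlt := hfb _ hmem
    rw [_root_.map_smul, smul_eq_mul, div_mul_cancel₀ _ (ne_of_gt hpos)] at hlt
    exact lt_irrefl _ hlt
  set c : Fin n → ℝ := fun i => f (EuclideanSpace.single i 1) with hc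
  have f_eq : ∀ z : EuclideanSpace ℝ (Fin n), f z = ∑ i, z i * c i := by
    intro z
    have hz := (EuclideanSpace.basisFun (Fin n) ℝ).sum_repr z
    conv_lhs => rw [← hz]
    rw [map_sum]
    refine Finset.sum_congr rfl fun i _ => ?_
    rw [_root_.map_smul, EuclideanSpace.basisFun_apply, EuclideanSpace.basisFun_repr, smul_eq_mul]
  refine ⟨Matrix.diagonal c, Matrix.isDiag_diagonal c, ?_, ?_⟩
  · rw [Matrix.trace_diagonal]
    have h1 : f ones = ∑ i, c i := by
      rw [f_eq]
      refine Finset.sum_congr rfl fun i _ => ?_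
      rw [hones, WithLp.equiv_symm_apply, PiLp.toLp_apply, one_mul]
    linarith [hfx]
  · intro v hv
    have hmem := sq_mem_S hv
    have h2 := hle _ hmem
    rw [f_eq] at h2
    have h3 : (v : Fin n → ℝ) ⬝ᵥ (Matrix.diagonal c).mulVec v =
        ∑ i, ((WithLp.equiv 2 (Fin n → ℝ)).symm fun i => v i * v i : EuclideanSpace ℝ (Fin n)) i * c i := by
      simp only [dotProduct, mulVec_diagonal, WithLp.equiv_symm_apply, PiLp.toLp_apply]
      exact Finset.sum_congr rfl fun i _ => by ring
    rw [h3]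
    exact h2

end CertAux

/-- `U` is not realizable iff there is a diagonal matrix `D` with `tr(D) > 0`
such that `vᵀ D v ≤ 0` for all `v ∈ Uᗮ`. -/
theorem not_realizable_iff_certificate (n : ℕ) (U : Submodule ℝ (EuclideanSpace ℝ (Fin n))) :
    ¬ Realizable U ↔
      ∃ D : Matrix (Fin n) (Fin n) ℝ, D.IsDiag ∧ 0 < D.trace ∧
        ∀ v ∈ Uᗮ, v ⬝ᵥ D.mulVec v ≤ 0 := by
  constructor
  · exact fun h => CertAux.forward U h
  · rintro ⟨D, hD, htr, hcert⟩
    exact CertAux.backward U D hD htr hcert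
end

section
/- If a subspace U of R^n is realizable, then every u ∈ U is balanced, i.e., for every index i, |u_i| ≤ Σ_{j≠i} |u_j|. -/
open scoped BigOperators

/-- Entries of a PSD matrix with unit diagonal have absolute value at most 1. -/
lemma entry_abs_le {n : ℕ} {Y : Matrix (Fin n) (Fin n) ℝ} (hY : Y.PosSemidef)
    (hd : ∀ i, Y i i = 1) (i j : Fin n) : |Y i j| ≤ 1 := by
  rcases eq_or_ne i j with rfl | hij
  · simp [hd i]
  have key : ∀ c : ℝ, 0 ≤ 1 + 2 * c * Y i j + c ^ 2 := by
    intro c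
    have h := hY.dotProduct_mulVec_nonneg (Pi.single i 1 + Pi.single j c)
    have hsym : Y j i = Y i j := by
      have h1 := congrFun (congrFun hY.1.symm i) j
      simpa [Matrix.conjTranspose_apply] using h1.symm
    have hA : Y.mulVec (Pi.single i 1) = fun k => Y k i := by
      ext k; simp [Matrix.mulVec, dotProduct, Pi.single_apply, mul_comm]
    have hB : Y.mulVec (Pi.single j c) = fun k => Y k j * c := by
      ext k; simp [Matrix.mulVec, dotProduct, Pi.single_apply, mul_comm]
    simp only [star_trivial, Matrix.mulVec_add, dotProduct_add,
      add_dotProduct, hA, hB] at h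
    simp only [dotProduct, Pi.single_apply, ite_mul, one_mul, zero_mul,
      Finset.sum_ite_eq', Finset.mem_univ, if_true] at h
    rw [hd i, hd j, hsym] at h
    nlinarith [h]
  have h1 := key 1
  have h2 := key (-1)
  rw [abs_le]; constructor <;> nlinarith

/-- if `U` is realizable then every `u ∈ U` is balanced. -/
theorem realizable_implies_balanced (n : ℕ) (U : Submodule ℝ (EuclideanSpace ℝ (Fin n)))
    (hU : Realizable U) :
    ∀ u ∈ U, ∀ i : Fin n, |u i| ≤ ∑ j ∈ Finset.univ.erase i, |u j| := by
  obtain ⟨Y, hpsd, hd, hnull⟩ := hU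
  intro u hu i
  have h0 : (Y.mulVec u) i = 0 := by rw [hnull u hu]; rfl
  have hsum : ∑ j, Y i j * u j = 0 := h0
  rw [← Finset.add_sum_erase Finset.univ _ (Finset.mem_univ i), hd i, one_mul] at hsum
  have hui : u i = -∑ j ∈ Finset.univ.erase i, Y i j * u j := by linarith
  calc |u i| = |∑ j ∈ Finset.univ.erase i, Y i j * u j| := by rw [hui, abs_neg]
    _ ≤ ∑ j ∈ Finset.univ.erase i, |Y i j * u j| := Finset.abs_sum_le_sum_abs _ _
    _ ≤ ∑ j ∈ Finset.univ.erase i, |u j| := by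
        apply Finset.sum_le_sum
        intro j _
        rw [abs_mul]
        calc |Y i j| * |u j| ≤ 1 * |u j| :=
              mul_le_mul_of_nonneg_right (entry_abs_le hpsd hd i j) (abs_nonneg _)
          _ = |u j| := one_mul _
end

section
/- Let u ∈ R^n be nonzero. The one-dimensional subspace span{u} is realizable if and only if u is balanced. -/
open scoped BigOperators
open Matrix

lemma greedy_signs {ι : Type*} [DecidableEq ι] (s : Finset ι) (a : ι → ℝ) (M : ℝ) (hM : 0 ≤ M)
    (h : ∀ i ∈ s, 0 ≤ a i ∧ a i ≤ M) :
    ∃ ε : ι → ℝ, (∀ i, ε i = 1 ∨ ε i = -1) ∧ |∑ i ∈ s, ε i * a i| ≤ M := by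
  induction s using Finset.cons_induction with
  | empty => exact ⟨fun _ => 1, fun _ => Or.inl rfl, by simpa⟩
  | cons i s his ih =>
    obtain ⟨ε, hε, hsum⟩ := ih (fun j hj => h j (Finset.mem_cons_of_mem hj))
    set S := ∑ j ∈ s, ε j * a j with hS
    obtain ⟨hai0, haiM⟩ := h i (Finset.mem_cons_self i s)
    refine ⟨Function.update ε i (if 0 ≤ S then -1 else 1), ?_, ?_⟩
    · intro j
      rcases eq_or_ne j i with rfl | hj
      · simp only [Function.update_self]
        split <;> simp
      · simpa [Function.update_of_ne hj] using hε j
    · rw [Finset.sum_cons, Function.update_self,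
        Finset.sum_congr rfl (fun j hj => by
          rw [Function.update_of_ne (ne_of_mem_of_not_mem hj his)]), ← hS]
      rw [abs_le] at *
      split <;> constructor <;> nlinarith [hsum.1, hsum.2]

lemma exists_triangle (t1 t2 t3 : ℝ) (h1 : 0 < t1) (h2 : 0 ≤ t2) (h3 : 0 ≤ t3)
    (ha : t3 ≤ t1 + t2) (hb : t2 ≤ t1 + t3) (hc : t1 ≤ t2 + t3) :
    ∃ e1 e2 e3 : ℝ × ℝ,
      (e1.1 ^ 2 + e1.2 ^ 2 = 1) ∧ (e2.1 ^ 2 + e2.2 ^ 2 = 1) ∧ (e3.1 ^ 2 + e3.2 ^ 2 = 1) ∧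
      t1 * e1.1 + t2 * e2.1 + t3 * e3.1 = 0 ∧
      t1 * e1.2 + t2 * e2.2 + t3 * e3.2 = 0 := by
  rcases eq_or_lt_of_le h3 with rfl | h3
  · exact ⟨(1, 0), (-1, 0), (1, 0), by norm_num, by norm_num, by norm_num,
      by simp; linarith, by simp⟩
  rcases eq_or_lt_of_le h2 with rfl | h2
  · exact ⟨(1, 0), (1, 0), (-1, 0), by norm_num, by norm_num, by norm_num,
      by simp; linarith, by simp⟩
  · obtain ⟨c, hcdef⟩ : ∃ c : ℝ, c = (t3 ^ 2 - t1 ^ 2 - t2 ^ 2) / (2 * t1 * t2) := ⟨_, rfl⟩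
    have hfac : 0 ≤ (t1 + t2 + t3) * ((t1 + t2 - t3) * ((t3 + t1 - t2) * (t3 - t1 + t2))) := by
      have := mul_nonneg (by linarith : (0:ℝ) ≤ t3 + t1 - t2) (by linarith : (0:ℝ) ≤ t3 - t1 + t2)
      exact mul_nonneg (by linarith) (mul_nonneg (by linarith) this)
    have hc2 : c ^ 2 ≤ 1 := by
      rw [hcdef, div_pow, div_le_one (by positivity)]
      nlinarith [hfac]
    obtain ⟨s, hsdef⟩ : ∃ s : ℝ, s = Real.sqrt (1 - c ^ 2) := ⟨_, rfl⟩
    have hs2 : s ^ 2 = 1 - c ^ 2 := by rw [hsdef]; exact Real.sq_sqrt (by linarith)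
    have hkey : t1 ^ 2 + t2 ^ 2 + 2 * t1 * t2 * c = t3 ^ 2 := by
      rw [hcdef]; field_simp; ring
    refine ⟨(1, 0), (c, s), (-(t1 + t2 * c) / t3, -(t2 * s) / t3), by norm_num, by linarith,
      ?_, ?_, ?_⟩
    · show (-(t1 + t2 * c) / t3) ^ 2 + (-(t2 * s) / t3) ^ 2 = 1
      field_simp
      nlinarith [hkey, hs2]
    · show t1 * 1 + t2 * c + t3 * (-(t1 + t2 * c) / t3) = 0
      field_simp; ring
    · show t1 * 0 + t2 * s + t3 * (-(t2 * s) / t3) = 0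
      field_simp; ring

/-- for nonzero `u`, `span{u}` is realizable iff `u` is balanced. -/
theorem span_singleton_realizable_iff_balanced (n : ℕ) (u : EuclideanSpace ℝ (Fin n))
    (hu : u ≠ 0) :
    Realizable (Submodule.span ℝ {u}) ↔
      ∀ i : Fin n, |u i| ≤ ∑ j ∈ Finset.univ.erase i, |u j| := by
  constructor
  · rintro ⟨Y, hY, hd, hnull⟩ i
    have hYu : Y.mulVec u = 0 := hnull u (Submodule.mem_span_singleton_self u)
    have hrow : ∑ j, Y i j * u j = 0 := by
      have := congrFun hYu i
      simpa [Matrix.mulVec, dotProduct] using this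
    have habs : ∀ j, j ≠ i → |Y i j| ≤ 1 := by
      intro j hji
      have hsym : Y j i = Y i j := by rw [← hY.1.apply i j]; simp
      have key : ∀ c : ℝ, 0 ≤ 1 + c * Y j i + (c * Y i j + c * c) := by
        intro c
        have h := hY.dotProduct_mulVec_nonneg (Pi.single i 1 + Pi.single j c)
        simp only [star_trivial, Matrix.mulVec_add, Matrix.mulVec_single,
          dotProduct_add, add_dotProduct, single_dotProduct,
          dotProduct_single] at h
        simpa [Pi.single_eq_same, Pi.single_eq_of_ne hji, Pi.single_eq_of_ne hji.symm, hd,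
          mul_comm] using h
      have h1 := key 1
      have h2 := key (-1)
      rw [abs_le]
      constructor <;> nlinarith [h1, h2, hsym]
    have hui : u i = -∑ j ∈ Finset.univ.erase i, Y i j * u j := by
      have h : Y i i * u i + ∑ j ∈ Finset.univ.erase i, Y i j * u j = ∑ j, Y i j * u j :=
        Finset.add_sum_erase Finset.univ (fun j => Y i j * u j) (Finset.mem_univ i)
      rw [hrow, hd i, one_mul] at h
      linarith
    calc |u i| = |∑ j ∈ Finset.univ.erase i, Y i j * u j| := by rw [hui, abs_neg]
      _ ≤ ∑ j ∈ Finset.univ.erase i, |Y i j * u j| := Finset.abs_sum_le_sum_abs _ _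
      _ ≤ ∑ j ∈ Finset.univ.erase i, |u j| := by
          refine Finset.sum_le_sum fun j hj => ?_
          rw [abs_mul]
          exact mul_le_of_le_one_left (abs_nonneg _)
            (habs j (Finset.ne_of_mem_erase hj))
  · intro hbal
    obtain ⟨j0, hj0⟩ : ∃ j, u j ≠ 0 := by
      by_contra h
      push_neg at h
      exact hu (by ext k; simpa using h k)
    set a : Fin n → ℝ := fun i => |u i| with hadef
    obtain ⟨i0, -, hmax⟩ := Finset.exists_max_image Finset.univ a ⟨j0, Finset.mem_univ _⟩
    have ht1 : 0 < a i0 := lt_of_lt_of_le (abs_pos.mpr hj0) (hmax j0 (Finset.mem_univ _))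
    obtain ⟨ε, hε, hεsum⟩ := greedy_signs (Finset.univ.erase i0) a (a i0) ht1.le
      (fun j _ => ⟨abs_nonneg _, hmax j (Finset.mem_univ _)⟩)
    set t2 := ∑ j ∈ (Finset.univ.erase i0).filter (fun j => ε j = 1), a j with ht2def
    set t3 := ∑ j ∈ (Finset.univ.erase i0).filter (fun j => ¬ ε j = 1), a j with ht3def
    have ht2n : 0 ≤ t2 := Finset.sum_nonneg fun j _ => abs_nonneg _
    have ht3n : 0 ≤ t3 := Finset.sum_nonneg fun j _ => abs_nonneg _
    have ht23 : t2 + t3 = ∑ j ∈ Finset.univ.erase i0, a j :=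
      Finset.sum_filter_add_sum_filter_not _ _ _
    have hdiff : t2 - t3 = ∑ j ∈ Finset.univ.erase i0, ε j * a j := by
      rw [← Finset.sum_filter_add_sum_filter_not (Finset.univ.erase i0) (fun j => ε j = 1)
        (fun j => ε j * a j)]
      have e1 : ∑ j ∈ (Finset.univ.erase i0).filter (fun j => ε j = 1), ε j * a j = t2 :=
        Finset.sum_congr rfl fun j hj => by rw [(Finset.mem_filter.mp hj).2, one_mul]
      have e2 : ∑ j ∈ (Finset.univ.erase i0).filter (fun j => ¬ ε j = 1), ε j * a j = -t3 := by
        rw [ht3def, ← Finset.sum_neg_distrib]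
        refine Finset.sum_congr rfl fun j hj => ?_
        rcases hε j with h1 | h1
        · exact absurd h1 (Finset.mem_filter.mp hj).2
        · rw [h1]; ring
      rw [e1, e2]; ring
    have habs' := abs_le.mp hεsum
    rw [← hdiff] at habs'
    obtain ⟨e1, e2, e3, hn1, hn2, hn3, hsx, hsy⟩ :=
      exists_triangle (a i0) t2 t3 ht1 ht2n ht3n
        (by linarith [habs'.1]) (by linarith [habs'.2])
        (by rw [ht23]; exact hbal i0)
    set g : Fin n → ℝ × ℝ := fun j => if j = i0 then e1 else if ε j = 1 then e2 else e3
      with hgdef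
    set V : Fin n → ℝ × ℝ := fun j => if 0 ≤ u j then g j else -g j with hVdef
    have hgnorm : ∀ j, (g j).1 ^ 2 + (g j).2 ^ 2 = 1 := by
      intro j
      rw [hgdef]
      dsimp only
      split_ifs <;> assumption
    have hVnorm : ∀ j, (V j).1 ^ 2 + (V j).2 ^ 2 = 1 := by
      intro j
      rw [hVdef]
      dsimp only
      split_ifs with h
      · exact hgnorm j
      · simpa using hgnorm j
    have hscale1 : ∀ j, u j * (V j).1 = a j * (g j).1 := by
      intro j
      rw [hVdef, hadef]
      dsimp only
      split_ifs with h
      · rw [abs_of_nonneg h]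
      · push_neg at h
        rw [abs_of_neg h]
        simp only [Prod.fst_neg]
        ring
    have hscale2 : ∀ j, u j * (V j).2 = a j * (g j).2 := by
      intro j
      rw [hVdef, hadef]
      dsimp only
      split_ifs with h
      · rw [abs_of_nonneg h]
      · push_neg at h
        rw [abs_of_neg h]
        simp only [Prod.snd_neg]
        ring
    have hgi0 : g i0 = e1 := by rw [hgdef]; simp
    have hgP : ∀ j ∈ (Finset.univ.erase i0).filter (fun j => ε j = 1), g j = e2 := by
      intro j hj
      obtain ⟨hj1, hj2⟩ := Finset.mem_filter.mp hj
      rw [hgdef]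
      dsimp only
      rw [if_neg (Finset.ne_of_mem_erase hj1), if_pos hj2]
    have hgQ : ∀ j ∈ (Finset.univ.erase i0).filter (fun j => ¬ ε j = 1), g j = e3 := by
      intro j hj
      obtain ⟨hj1, hj2⟩ := Finset.mem_filter.mp hj
      rw [hgdef]
      dsimp only
      rw [if_neg (Finset.ne_of_mem_erase hj1), if_neg hj2]
    have hsum1 : ∑ j, a j * (g j).1 = 0 := by
      have hP1 : ∑ j ∈ (Finset.univ.erase i0).filter (fun j => ε j = 1), a j * (g j).1
          = t2 * e2.1 := by
        rw [ht2def, Finset.sum_mul]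
        exact Finset.sum_congr rfl fun j hj => by rw [hgP j hj]
      have hQ1 : ∑ j ∈ (Finset.univ.erase i0).filter (fun j => ¬ ε j = 1), a j * (g j).1
          = t3 * e3.1 := by
        rw [ht3def, Finset.sum_mul]
        exact Finset.sum_congr rfl fun j hj => by rw [hgQ j hj]
      have hsplit : a i0 * (g i0).1 + ∑ j ∈ Finset.univ.erase i0, a j * (g j).1
          = ∑ j, a j * (g j).1 :=
        Finset.add_sum_erase Finset.univ (fun j => a j * (g j).1) (Finset.mem_univ i0)
      have hsplit2 := Finset.sum_filter_add_sum_filter_not (Finset.univ.erase i0)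
        (fun j => ε j = 1) (fun j => a j * (g j).1)
      rw [← hsplit, ← hsplit2, hP1, hQ1, hgi0]
      linarith [hsx]
    have hsum2 : ∑ j, a j * (g j).2 = 0 := by
      have hP1 : ∑ j ∈ (Finset.univ.erase i0).filter (fun j => ε j = 1), a j * (g j).2
          = t2 * e2.2 := by
        rw [ht2def, Finset.sum_mul]
        exact Finset.sum_congr rfl fun j hj => by rw [hgP j hj]
      have hQ1 : ∑ j ∈ (Finset.univ.erase i0).filter (fun j => ¬ ε j = 1), a j * (g j).2
          = t3 * e3.2 := by
        rw [ht3def, Finset.sum_mul]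
        exact Finset.sum_congr rfl fun j hj => by rw [hgQ j hj]
      have hsplit : a i0 * (g i0).2 + ∑ j ∈ Finset.univ.erase i0, a j * (g j).2
          = ∑ j, a j * (g j).2 :=
        Finset.add_sum_erase Finset.univ (fun j => a j * (g j).2) (Finset.mem_univ i0)
      have hsplit2 := Finset.sum_filter_add_sum_filter_not (Finset.univ.erase i0)
        (fun j => ε j = 1) (fun j => a j * (g j).2)
      rw [← hsplit, ← hsplit2, hP1, hQ1, hgi0]
      linarith [hsy]
    set B : Matrix (Fin 2) (Fin n) ℝ := fun k j => if k = 0 then (V j).1 else (V j).2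
      with hBdef
    have hB0 : ∀ j, B 0 j = (V j).1 := fun j => by simp [hBdef]
    have hB1 : ∀ j, B 1 j = (V j).2 := fun j => by norm_num [hBdef]
    refine ⟨Bᴴ * B, Matrix.posSemidef_conjTranspose_mul_self B, ?_, ?_⟩
    · intro i
      rw [Matrix.mul_apply, Fin.sum_univ_two]
      simp only [Matrix.conjTranspose_apply, star_trivial, hB0, hB1]
      have h := hVnorm i
      nlinarith [h]
    · intro w hw
      obtain ⟨cw, rfl⟩ := Submodule.mem_span_singleton.mp hw
      have hBu : B.mulVec u = 0 := by
        ext k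
        fin_cases k
        · show ∑ j, B 0 j * u j = 0
          calc ∑ j, B 0 j * u j = ∑ j, a j * (g j).1 :=
              Finset.sum_congr rfl fun j _ => by rw [hB0, mul_comm, hscale1 j]
            _ = 0 := hsum1
        · show ∑ j, B 1 j * u j = 0
          calc ∑ j, B 1 j * u j = ∑ j, a j * (g j).2 :=
              Finset.sum_congr rfl fun j _ => by rw [hB1, mul_comm, hscale2 j]
            _ = 0 := hsum2
      have hfull : (Bᴴ * B).mulVec u = 0 := by
        rw [← Matrix.mulVec_mulVec, hBu, Matrix.mulVec_zero]
      have hsmul : (Bᴴ * B).mulVec (cw • u) = cw • (Bᴴ * B).mulVec u := by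
        ext k
        simp only [Matrix.mulVec, dotProduct, PiLp.smul_apply, smul_eq_mul,
          Pi.smul_apply, Finset.mul_sum]
        exact Finset.sum_congr rfl fun j _ => by ring
      rw [WithLp.ofLp_smul, hsmul, hfull, smul_zero]
end

section
/- Let V be a k×n matrix with nullspace U and columns v_1,...,v_n ∈ R^k. Then every u ∈ U is balanced if and only if for each i, the point v_i lies on the boundary of the convex hull of {±v_1, ±v_2, ..., ±v_n}. -/
open Matrix

open scoped BigOperators

private lemma sign_mul_self_eq_abs (x : ℝ) : Real.sign x * x = |x| := by
  rcases lt_trichotomy x 0 with h|h|h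
  · rw [Real.sign_of_neg h, abs_of_neg h]; ring
  · simp [h]
  · rw [Real.sign_of_pos h, abs_of_pos h]; ring

/-- every vector in the nullspace of `V` is balanced iff each column of `V`
lies on the boundary of the convex hull of the columns and their negatives. -/
theorem nullspace_balanced_iff_columns_on_boundary (n k : ℕ) (V : Matrix (Fin k) (Fin n) ℝ) :
    (∀ u : Fin n → ℝ, V.mulVec u = 0 →
        ∀ i : Fin n, |u i| ≤ ∑ j ∈ Finset.univ.erase i, |u j|) ↔
      (∀ i : Fin n, ∃ x : Fin k → ℝ,
        x ⬝ᵥ (fun l => V l i) = 1 ∧ ∀ j : Fin n, |x ⬝ᵥ (fun l => V l j)| ≤ 1) := by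
  constructor
  · intro hbal i
    by_contra hx
    -- the row space of V, as a submodule of `Fin n → ℝ`
    set W : Submodule ℝ (Fin n → ℝ) := LinearMap.range (Vᵀ.mulVecLin) with hWdef
    have hWmem : ∀ w ∈ W, ∃ x : Fin k → ℝ, ∀ j, w j = x ⬝ᵥ (fun l => V l j) := by
      rintro w ⟨x, rfl⟩
      exact ⟨x, fun j => by simp [Matrix.mulVec, dotProduct, transpose, mul_comm]⟩
    have hrowmem : ∀ l : Fin k, (fun j => V l j) ∈ W := by
      intro l
      refine ⟨Pi.single l 1, ?_⟩
      funext j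
      simp [Matrix.mulVec, dotProduct, transpose, Pi.single_apply]
    -- the compact convex set B
    set B : Set (Fin n → ℝ) := {y | y i = 1 ∧ ∀ j, |y j| ≤ 1} with hBdef
    have hBconv : Convex ℝ B := by
      rintro y ⟨hy1, hy2⟩ z ⟨hz1, hz2⟩ a b ha hb hab
      constructor
      · simp only [Pi.add_apply, Pi.smul_apply, smul_eq_mul, hy1, hz1]
        linarith
      · intro j
        calc |(a • y + b • z) j| ≤ a * |y j| + b * |z j| := by
              simp only [Pi.add_apply, Pi.smul_apply, smul_eq_mul]
              calc |a * y j + b * z j| ≤ |a * y j| + |b * z j| := abs_add_le _ _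
                _ = a * |y j| + b * |z j| := by
                    rw [abs_mul, abs_mul, abs_of_nonneg ha, abs_of_nonneg hb]
          _ ≤ a * 1 + b * 1 := by
              gcongr
              · exact hy2 j
              · exact hz2 j
          _ = 1 := by linarith
    have hBclosed : IsClosed B := by
      have h1 : IsClosed {y : Fin n → ℝ | y i = 1} :=
        isClosed_eq (continuous_apply i) continuous_const
      have h2 : IsClosed {y : Fin n → ℝ | ∀ j, |y j| ≤ 1} := by
        have : {y : Fin n → ℝ | ∀ j, |y j| ≤ 1} = ⋂ j, {y | |y j| ≤ 1} := by
          ext y; simp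
        rw [this]
        exact isClosed_iInter fun j =>
          isClosed_le ((continuous_apply j).abs) continuous_const
      exact h1.inter h2
    have hBcompact : IsCompact B := by
      have hpi : IsCompact (Set.univ.pi fun _ : Fin n => Set.Icc (-1 : ℝ) 1) :=
        isCompact_univ_pi fun _ => isCompact_Icc
      refine hpi.of_isClosed_subset hBclosed ?_
      rintro y ⟨-, hy⟩ j -
      exact abs_le.mp (hy j)
    -- disjointness
    have hdisj : Disjoint (W : Set (Fin n → ℝ)) B := by
      rw [Set.disjoint_left]
      rintro w hw ⟨hw1, hw2⟩
      obtain ⟨x, hxw⟩ := hWmem w hw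
      exact hx ⟨x, by rw [← hxw i]; exact hw1, fun j => by rw [← hxw j]; exact hw2 j⟩
    obtain ⟨f, a, b, hfa, hab, hfb⟩ :=
      geometric_hahn_banach_closed_compact (W.convex)
        (Submodule.closed_of_finiteDimensional W) hBconv hBcompact hdisj
    -- f vanishes on W
    have hfW : ∀ w ∈ W, f w = 0 := by
      intro w hw
      by_contra hne
      have h := hfa (((|a| + 1) / f w) • w) (W.smul_mem _ hw)
      rw [_root_.map_smul, smul_eq_mul, div_mul_cancel₀ _ hne] at h
      have := le_abs_self a
      linarith
    have ha0 : 0 < a := by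
      have := hfa 0 (W.zero_mem)
      simpa using this
    -- the separating vector
    set u : Fin n → ℝ := fun j => f (Pi.single j 1) with hudef
    have hfdecomp : ∀ y : Fin n → ℝ, f y = ∑ j, y j * u j := by
      intro y
      have hy : y = ∑ j, y j • (Pi.single j (1 : ℝ) : Fin n → ℝ) := by
        conv_lhs => rw [← Finset.univ_sum_single y]
        refine Finset.sum_congr rfl fun j _ => ?_
        funext j'
        simp [Pi.single_apply]
      conv_lhs => rw [hy]
      rw [map_sum]
      simp [hudef]
    -- u is in the nullspace
    have hmul : V.mulVec u = 0 := by
      funext l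
      have : f (fun j => V l j) = 0 := hfW _ (hrowmem l)
      rw [hfdecomp] at this
      simpa [Matrix.mulVec, dotProduct, mul_comm] using this
    -- the point of B witnessing unbalancedness
    set y : Fin n → ℝ := fun j => if j = i then 1 else -Real.sign (u j) with hydef
    have hyB : y ∈ B := by
      constructor
      · simp [hydef]
      · intro j
        by_cases h : j = i
        · simp [hydef, h]
        · simp only [hydef, if_neg h, abs_neg]
          rcases Real.sign_apply_eq (u j) with h'|h'|h' <;> simp [h']
    have hfy : f y = u i - ∑ j ∈ Finset.univ.erase i, |u j| := by
      rw [hfdecomp]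
      rw [← Finset.add_sum_erase _ _ (Finset.mem_univ i)]
      have h1 : y i * u i = u i := by simp [hydef]
      have h2 : ∀ j ∈ Finset.univ.erase i, y j * u j = -|u j| := by
        intro j hj
        have hji : j ≠ i := Finset.ne_of_mem_erase hj
        simp only [hydef, if_neg hji]
        rw [neg_mul, sign_mul_self_eq_abs]
      rw [h1, Finset.sum_congr rfl h2, Finset.sum_neg_distrib]
      ring
    have hgt : a < f y := lt_trans hab (hfb y hyB)
    rw [hfy] at hgt
    have hb := hbal u hmul i
    have := le_abs_self (u i)
    linarith
  · intro hbd u hu i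
    obtain ⟨x, hxi, hxj⟩ := hbd i
    have h0 : ∑ j, (x ⬝ᵥ fun l => V l j) * u j = 0 := by
      have h := congrArg (fun w => x ⬝ᵥ w) hu
      change x ⬝ᵥ V.mulVec u = x ⬝ᵥ 0 at h
      rw [dotProduct_mulVec] at h
      simpa [vecMul, dotProduct] using h
    rw [← Finset.add_sum_erase _ _ (Finset.mem_univ i), hxi, one_mul] at h0
    have hui : u i = -∑ j ∈ Finset.univ.erase i, (x ⬝ᵥ fun l => V l j) * u j := by
      linarith
    calc |u i| = |∑ j ∈ Finset.univ.erase i, (x ⬝ᵥ fun l => V l j) * u j| := by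
          rw [hui, abs_neg]
      _ ≤ ∑ j ∈ Finset.univ.erase i, |(x ⬝ᵥ fun l => V l j) * u j| :=
          Finset.abs_sum_le_sum_abs _ _
      _ ≤ ∑ j ∈ Finset.univ.erase i, |u j| := by
          refine Finset.sum_le_sum fun j _ => ?_
          rw [abs_mul]
          calc |x ⬝ᵥ fun l => V l j| * |u j| ≤ 1 * |u j| :=
                mul_le_mul_of_nonneg_right (hxj j) (abs_nonneg _)
            _ = |u j| := one_mul _
end

section
/- If U is a subspace of R^n with coherence μ(U) < 1/2, then U is realizable; i.e., there exists a positive semidefinite matrix Y with unit diagonal whose nullspace contains U. -/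
/-- The coherence of a subspace `U` of `ℝⁿ`: `μ(U) = max_i ‖P_U e_i‖²`. -/
noncomputable def coherence {n : ℕ} (U : Submodule ℝ (EuclideanSpace ℝ (Fin n))) : ℝ :=
  ⨆ i : Fin n, ‖(U.orthogonalProjectionOnto (EuclideanSpace.single i 1) : EuclideanSpace ℝ (Fin n))‖^2

open Finset in
/-- A (row) strictly diagonally dominant matrix with nonnegative entries gives a surjective
linear map. -/
lemma aux_surj {n : ℕ} (T : Matrix (Fin n) (Fin n) ℝ) (hT : ∀ i j, 0 ≤ T i j)
    (hdom : ∀ i, ∑ j ∈ univ.erase i, T i j < T i i) :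
    Function.Surjective T.mulVec := by
  have hinj : Function.Injective T.mulVecLin := by
    rw [← LinearMap.ker_eq_bot, LinearMap.ker_eq_bot']
    intro v hv
    by_contra hne
    obtain ⟨j0, hj0⟩ := Function.ne_iff.mp hne
    obtain ⟨i, -, hi⟩ := Finset.exists_max_image Finset.univ (fun j => |v j|) ⟨j0, mem_univ _⟩
    have hipos : 0 < |v i| := lt_of_lt_of_le (abs_pos.mpr hj0) (hi j0 (mem_univ _))
    have hvi : ∑ j, T i j * v j = 0 := by
      have := congrFun (show T.mulVec v = 0 from hv) i
      simpa [Matrix.mulVec, dotProduct] using this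
    have hsplit : T i i * v i + ∑ j ∈ univ.erase i, T i j * v j = 0 := by
      rw [Finset.add_sum_erase univ (fun j => T i j * v j) (mem_univ i)]; exact hvi
    have h1 : T i i * |v i| = |∑ j ∈ univ.erase i, T i j * v j| := by
      have : T i i * v i = -(∑ j ∈ univ.erase i, T i j * v j) := by linarith
      calc T i i * |v i| = |T i i * v i| := by
            rw [abs_mul, abs_of_nonneg (hT i i)]
        _ = |∑ j ∈ univ.erase i, T i j * v j| := by rw [this, abs_neg]
    have h2 : |∑ j ∈ univ.erase i, T i j * v j| ≤ (∑ j ∈ univ.erase i, T i j) * |v i| := by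
      calc |∑ j ∈ univ.erase i, T i j * v j| ≤ ∑ j ∈ univ.erase i, |T i j * v j| :=
            Finset.abs_sum_le_sum_abs _ _
        _ ≤ ∑ j ∈ univ.erase i, T i j * |v i| := by
            refine Finset.sum_le_sum fun j _ => ?_
            rw [abs_mul, abs_of_nonneg (hT i j)]
            exact mul_le_mul_of_nonneg_left (hi j (mem_univ _)) (hT i j)
        _ = (∑ j ∈ univ.erase i, T i j) * |v i| := by rw [Finset.sum_mul]
    have h3 : (∑ j ∈ univ.erase i, T i j) * |v i| < T i i * |v i| :=
      mul_lt_mul_of_pos_right (hdom i) hipos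
    linarith
  have hsurj := (LinearMap.injective_iff_surjective).mp hinj
  intro b
  obtain ⟨v, hvb⟩ := hsurj b
  exact ⟨v, hvb⟩

open Finset in
/-- Nonnegativity of the solution of the diagonally dominant system arising from low coherence. -/
lemma aux_nonneg {n : ℕ} (T : Matrix (Fin n) (Fin n) ℝ) (p : Fin n → ℝ) (μ : ℝ)
    (hT : ∀ i j, 0 ≤ T i j) (hdiag : ∀ i, T i i = (1 - p i) ^ 2)
    (hrow : ∀ i, ∑ j, T i j = 1 - p i)
    (hp0 : ∀ i, 0 ≤ p i) (hpμ : ∀ i, p i ≤ μ) (hμ : μ < 1 / 2)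
    (w : Fin n → ℝ) (hw : ∀ i, ∑ j, T i j * w j = 1) :
    ∀ i, 0 ≤ w i := by
  intro i0
  by_contra hneg
  push_neg at hneg
  obtain ⟨i, -, hi⟩ := Finset.exists_min_image Finset.univ w ⟨i0, mem_univ _⟩
  obtain ⟨k, -, hk⟩ := Finset.exists_max_image Finset.univ w ⟨i0, mem_univ _⟩
  have hwi : w i < 0 := lt_of_le_of_lt (hi i0 (mem_univ _)) hneg
  have herase : ∀ m : Fin n, ∑ j ∈ univ.erase m, T m j = (1 - p m) * p m := by
    intro m
    have := Finset.add_sum_erase univ (fun j => T m j) (mem_univ m)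
    have h2 := hrow m
    have h3 := hdiag m
    nlinarith [this, h2, h3]
  -- inequality at the min index i
  have hIi : 1 ≤ (1 - p i) ^ 2 * w i + (1 - p i) * p i * w k := by
    have hsum : ∑ j ∈ univ.erase i, T i j * w j ≤ ∑ j ∈ univ.erase i, T i j * w k :=
      Finset.sum_le_sum fun j _ => mul_le_mul_of_nonneg_left (hk j (mem_univ _)) (hT i j)
    have hsplit : T i i * w i + ∑ j ∈ univ.erase i, T i j * w j = 1 := by
      rw [Finset.add_sum_erase univ (fun j => T i j * w j) (mem_univ i)]; exact hw i
    rw [hdiag i] at hsplit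
    have : ∑ j ∈ univ.erase i, T i j * w k = (1 - p i) * p i * w k := by
      rw [← Finset.sum_mul, herase i]
    linarith
  -- inequality at the max index k
  have hIk : (1 - p k) ^ 2 * w k + (1 - p k) * p k * w i ≤ 1 := by
    have hsum : ∑ j ∈ univ.erase k, T k j * w i ≤ ∑ j ∈ univ.erase k, T k j * w j :=
      Finset.sum_le_sum fun j _ => mul_le_mul_of_nonneg_left (hi j (mem_univ _)) (hT k j)
    have hsplit : T k k * w k + ∑ j ∈ univ.erase k, T k j * w j = 1 := by
      rw [Finset.add_sum_erase univ (fun j => T k j * w j) (mem_univ k)]; exact hw k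
    rw [hdiag k] at hsplit
    have : ∑ j ∈ univ.erase k, T k j * w i = (1 - p k) * p k * w i := by
      rw [← Finset.sum_mul, herase k]
    linarith
  -- numeric contradiction
  set a : ℝ := -w i with ha
  set b : ℝ := w k with hb
  have ha0 : 0 < a := by simp [ha]; linarith
  have hpi0 := hp0 i
  have hpk0 := hp0 k
  have hpiμ := hpμ i
  have hpkμ := hpμ k
  have hμ0 : 0 ≤ μ := le_trans hpi0 hpiμ
  have hbpos : 0 < b := by
    nlinarith [mul_nonneg (sq_nonneg (1 - p i)) (by linarith : (0:ℝ) ≤ -w i),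
      mul_nonneg (by linarith : (0:ℝ) ≤ 1 - p i) hpi0]
  -- (1-μ)μ b ≥ 1 + (1-μ)² a
  have key1 : 1 + (1 - μ) ^ 2 * a ≤ (1 - μ) * μ * b := by
    have hmono : (1 - p i) * p i ≤ (1 - μ) * μ := by nlinarith
    nlinarith [mul_le_mul_of_nonneg_right hmono (le_of_lt hbpos),
      mul_nonneg (mul_nonneg (sub_nonneg.mpr hpiμ) (by linarith : (0:ℝ) ≤ 2 - μ - p i))
        (le_of_lt ha0)]
  have key2 : (1 - μ) ^ 2 * b ≤ 1 + (1 - μ) * μ * a := by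
    have hmono : (1 - p k) * p k ≤ (1 - μ) * μ := by nlinarith
    nlinarith [mul_le_mul_of_nonneg_right hmono (le_of_lt ha0),
      mul_nonneg (mul_nonneg (sub_nonneg.mpr hpkμ) (by linarith : (0:ℝ) ≤ 2 - μ - p k))
        (le_of_lt hbpos)]
  have h5 := mul_le_mul_of_nonneg_left key1 (by linarith : (0:ℝ) ≤ 1 - μ)
  have h6 := mul_le_mul_of_nonneg_left key2 (by linarith : (0:ℝ) ≤ μ)
  nlinarith [h5, h6, mul_pos (mul_pos (show (0:ℝ) < 1 - μ by linarith)
    (show (0:ℝ) < 1 - 2*μ by linarith)) ha0]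

open Finset RealInnerProductSpace in
/-- if `μ(U) < 1/2` then `U` is realizable. -/
theorem realizable_of_coherence_lt_half (n : ℕ) (U : Submodule ℝ (EuclideanSpace ℝ (Fin n)))
    (h : coherence U < 1 / 2) : Realizable U := by
  classical
  set μ : ℝ := coherence U with hμdef
  set e : Fin n → EuclideanSpace ℝ (Fin n) := fun i => EuclideanSpace.single i 1 with he
  set q : Fin n → EuclideanSpace ℝ (Fin n) :=
    fun i => (U.orthogonalProjectionOnto (e i) : EuclideanSpace ℝ (Fin n)) with hq
  set f : Fin n → EuclideanSpace ℝ (Fin n) := fun i => e i - q i with hf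
  set p : Fin n → ℝ := fun i => ‖q i‖ ^ 2 with hp
  have hμsup : μ = ⨆ i, p i := rfl
  have hpμ : ∀ i, p i ≤ μ := by
    intro i
    rw [hμsup]
    exact le_ciSup (Set.Finite.bddAbove (Set.finite_range _)) i
  have hfU : ∀ i, f i ∈ Uᗮ := fun i => U.sub_starProjection_mem_orthogonal (e i)
  have hqU : ∀ i, (q i) ∈ U := fun i => (U.orthogonalProjectionOnto (e i)).2
  have hinner0 : ∀ i, ∀ u ∈ U, ⟪f i, u⟫ = 0 := by
    intro i u hu
    rw [real_inner_comm]
    exact (Submodule.mem_orthogonal _ _).1 (hfU i) u hu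
  have hip : ∀ x y : EuclideanSpace ℝ (Fin n), ⟪x, y⟫ = ∑ j, x j * y j := by
    intro x y
    simp [PiLp.inner_apply]
    exact Finset.sum_congr rfl fun _ _ => mul_comm _ _
  have hx : ∀ (x : EuclideanSpace ℝ (Fin n)) i, ⟪x, e i⟫ = x i := by
    intro x i
    rw [hip]
    simp [he, EuclideanSpace.single_apply]
  have heq : ∀ i, e i = f i + q i := fun i => (sub_add_cancel (e i) (q i)).symm
  have hF : ∀ i j, ⟪f i, f j⟫ = f i j := by
    intro i j
    have h1 : ⟪f i, e j⟫ = f i j := hx _ j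
    rw [heq j, inner_add_right, hinner0 i (q j) (hqU j), add_zero] at h1
    exact h1
  have hsym : ∀ i j, f i j = f j i := by
    intro i j
    rw [← hF i j, ← hF j i, real_inner_comm]
  have hsq : ∀ i, ∑ j, f i j * f i j = f i i := by
    intro i
    rw [← hip, hF]
  have hqii : ∀ i, p i = q i i := by
    intro i
    have h1 : ⟪q i, e i⟫ = q i i := hx _ i
    rw [heq i, inner_add_right, real_inner_comm (f i) (q i), hinner0 i (q i) (hqU i),
      zero_add, real_inner_self_eq_norm_sq] at h1
    exact h1
  have hfii : ∀ i, f i i = 1 - p i := by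
    intro i
    have h1 : e i i = 1 := by simp [he, EuclideanSpace.single_apply]
    have h2 : f i i = e i i - q i i := rfl
    rw [h2, h1, ← hqii]
  have hp0 : ∀ i, 0 ≤ p i := fun i => sq_nonneg _
  -- the matrix T of squared entries
  set T : Matrix (Fin n) (Fin n) ℝ := Matrix.of (fun i j => (f i j) ^ 2) with hT
  have hTnn : ∀ i j, 0 ≤ T i j := fun i j => sq_nonneg _
  have hdiagT : ∀ i, T i i = (1 - p i) ^ 2 := by
    intro i
    show (f i i) ^ 2 = (1 - p i) ^ 2
    rw [hfii i]
  have hrowT : ∀ i, ∑ j, T i j = 1 - p i := by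
    intro i
    calc ∑ j, T i j = ∑ j, f i j * f i j := Finset.sum_congr rfl fun j _ => sq (f i j)
      _ = f i i := hsq i
      _ = 1 - p i := hfii i
  have hdom : ∀ i, ∑ j ∈ Finset.univ.erase i, T i j < T i i := by
    intro i
    have hadd := Finset.add_sum_erase Finset.univ (fun j => T i j) (Finset.mem_univ i)
    have h1 := hrowT i; have h2 := hdiagT i; have h3 := hp0 i; have h4 := hpμ i
    nlinarith [hadd]
  obtain ⟨w, hw⟩ := aux_surj T hTnn hdom (fun _ => 1)
  have hw1 : ∀ i, ∑ j, T i j * w j = 1 := by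
    intro i
    have := congrFun hw i
    simpa [Matrix.mulVec, dotProduct] using this
  have hw0 : ∀ i, 0 ≤ w i := aux_nonneg T p μ hTnn hdiagT hrowT hp0 hpμ h w hw1
  -- the correlation matrix
  refine ⟨Matrix.of fun i j => ∑ k, w k * (f k i * f k j), Matrix.PosSemidef.of_dotProduct_mulVec_nonneg ?_ ?_, ?_, ?_⟩
  · -- Hermitian
    ext i j
    show ∑ k, w k * (f k j * f k i) = ∑ k, w k * (f k i * f k j)
    exact Finset.sum_congr rfl fun k _ => by ring
  · -- quadratic form nonnegative
    intro x
    have hxs : star x = x := by funext j; simp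
    have key : dotProduct x
        ((Matrix.of fun i j => ∑ k, w k * (f k i * f k j)).mulVec x)
        = ∑ k, w k * ((∑ i, f k i * x i) * (∑ j, f k j * x j)) := by
      show ∑ i, x i * ∑ j, (∑ k, w k * (f k i * f k j)) * x j = _
      calc ∑ i, x i * ∑ j, (∑ k, w k * (f k i * f k j)) * x j
          = ∑ i, ∑ j, ∑ k, w k * ((f k i * x i) * (f k j * x j)) := by
            refine Finset.sum_congr rfl fun i _ => ?_
            rw [Finset.mul_sum]
            refine Finset.sum_congr rfl fun j _ => ?_
            rw [Finset.sum_mul, Finset.mul_sum]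
            exact Finset.sum_congr rfl fun k _ => by ring
        _ = ∑ i, ∑ k, ∑ j, w k * ((f k i * x i) * (f k j * x j)) :=
            Finset.sum_congr rfl fun i _ => Finset.sum_comm
        _ = ∑ k, ∑ i, ∑ j, w k * ((f k i * x i) * (f k j * x j)) := Finset.sum_comm
        _ = ∑ k, w k * ((∑ i, f k i * x i) * (∑ j, f k j * x j)) := by
            refine Finset.sum_congr rfl fun k _ => ?_
            rw [Finset.sum_mul_sum, Finset.mul_sum]
            refine Finset.sum_congr rfl fun i _ => ?_
            rw [Finset.mul_sum]
    rw [hxs, key]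
    refine Finset.sum_nonneg fun k _ => mul_nonneg (hw0 k) ?_
    exact mul_self_nonneg _
  · -- unit diagonal
    intro i
    show ∑ k, w k * (f k i * f k i) = 1
    calc ∑ k, w k * (f k i * f k i) = ∑ k, T i k * w k := by
          refine Finset.sum_congr rfl fun k _ => ?_
          show w k * (f k i * f k i) = (f i k) ^ 2 * w k
          rw [hsym k i]; ring
      _ = 1 := hw1 i
  · -- nullspace contains U
    intro u hu
    funext i
    show ∑ j, (∑ k, w k * (f k i * f k j)) * u j = 0
    calc ∑ j, (∑ k, w k * (f k i * f k j)) * u j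
        = ∑ j, ∑ k, (w k * f k i) * (f k j * u j) := by
          refine Finset.sum_congr rfl fun j _ => ?_
          rw [Finset.sum_mul]
          exact Finset.sum_congr rfl fun k _ => by ring
      _ = ∑ k, ∑ j, (w k * f k i) * (f k j * u j) := Finset.sum_comm
      _ = ∑ k, (w k * f k i) * (∑ j, f k j * u j) := by
          refine Finset.sum_congr rfl fun k _ => ?_
          rw [Finset.mul_sum]
      _ = 0 := by
          refine Finset.sum_eq_zero fun k _ => ?_
          rw [← hip, hinner0 k u hu, mul_zero]
end

section
/- Let A be an n×n matrix with nonnegative entries and positive diagonal entries, let D be the diagonal matrix with D_ii = A_ii, and let y be a vector with y > 0 entrywise. If 2y − A D^{-1} y > 0 entrywise, then A is invertible and A^{-1} y > 0 entrywise. -/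
/-- Walters's theorem: if `A` has nonnegative entries, positive diagonal,
`y > 0`, and `2y - A D⁻¹ y > 0` entrywise (where `D = diag(A)`), then `A` is invertible
and `A⁻¹ y > 0` entrywise. -/
theorem walters_theorem (n : ℕ) (A : Matrix (Fin n) (Fin n) ℝ) (y : Fin n → ℝ)
    (hA : ∀ i j, 0 ≤ A i j) (hdiag : ∀ i, 0 < A i i) (hy : ∀ i, 0 < y i)
    (h : ∀ i, A.mulVec (fun j => y j / A j j) i < 2 * y i) :
    IsUnit A ∧ ∀ i, 0 < A⁻¹.mulVec y i := by
  classical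
  set x : Fin n → ℝ := fun j => y j / A j j with hxdef
  have hx_pos : ∀ j, 0 < x j := fun j => div_pos (hy j) (hdiag j)
  have hAx : ∀ j, A j j * x j = y j := fun j =>
    mul_div_cancel₀ (y j) (hdiag j).ne'
  -- the off-diagonal row sums (scaled) are strictly below y i
  have hs : ∀ i, ∑ j ∈ Finset.univ.erase i, A i j * x j < y i := by
    intro i
    have hi := h i
    rw [Matrix.mulVec, dotProduct] at hi
    rw [← Finset.add_sum_erase _ _ (Finset.mem_univ i), hAx i] at hi
    linarith
  have hsnn : ∀ i, (0:ℝ) ≤ ∑ j ∈ Finset.univ.erase i, A i j * x j := by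
    intro i
    exact Finset.sum_nonneg fun j _ => mul_nonneg (hA i j) (hx_pos j).le
  -- kernel is trivial
  have hker : ∀ d, A.mulVec d = 0 → d = 0 := by
    intro d hd
    by_contra hne
    have hne' : ∃ j, d j ≠ 0 := by
      by_contra h'
      push_neg at h'
      exact hne (funext h')
    obtain ⟨j0, hj0⟩ := hne'
    obtain ⟨i, -, hi⟩ := Finset.exists_max_image Finset.univ (fun j => |d j| / x j)
      ⟨j0, Finset.mem_univ j0⟩
    set c := |d i| / x i with hcdef
    have hc_pos : 0 < c :=
      lt_of_lt_of_le (div_pos (abs_pos.mpr hj0) (hx_pos j0)) (hi j0 (Finset.mem_univ j0))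
    have hbound : ∀ j, |d j| ≤ c * x j := by
      intro j
      have h2 := hi j (Finset.mem_univ j)
      rw [div_le_div_iff₀ (hx_pos j) (hx_pos i)] at h2
      rw [hcdef, div_mul_eq_mul_div, le_div_iff₀ (hx_pos i)]
      linarith
    have hdi : |d i| = c * x i := by
      rw [hcdef, div_mul_cancel₀ _ (hx_pos i).ne']
    have heq : A i i * d i + ∑ j ∈ Finset.univ.erase i, A i j * d j = 0 := by
      have := congrFun hd i
      rw [Matrix.mulVec, dotProduct,
        ← Finset.add_sum_erase _ _ (Finset.mem_univ i)] at this
      simpa using this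
    have hlhs : A i i * |d i| = c * y i := by
      rw [hdi, ← hAx i]; ring
    have hstep : A i i * |d i| ≤ c * ∑ j ∈ Finset.univ.erase i, A i j * x j := by
      have h1 : A i i * d i = -∑ j ∈ Finset.univ.erase i, A i j * d j := by linarith
      calc A i i * |d i| = |A i i * d i| := by
            rw [abs_mul, abs_of_pos (hdiag i)]
        _ = |∑ j ∈ Finset.univ.erase i, A i j * d j| := by rw [h1, abs_neg]
        _ ≤ ∑ j ∈ Finset.univ.erase i, |A i j * d j| := Finset.abs_sum_le_sum_abs _ _
        _ ≤ ∑ j ∈ Finset.univ.erase i, A i j * (c * x j) := by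
            apply Finset.sum_le_sum
            intro j _
            rw [abs_mul, abs_of_nonneg (hA i j)]
            exact mul_le_mul_of_nonneg_left (hbound j) (hA i j)
        _ = c * ∑ j ∈ Finset.univ.erase i, A i j * x j := by
            rw [Finset.mul_sum]; exact Finset.sum_congr rfl fun j _ => by ring
    have : c * y i < c * y i :=
      lt_of_le_of_lt (hlhs ▸ hstep) (mul_lt_mul_of_pos_left (hs i) hc_pos)
    exact lt_irrefl _ this
  have hinj : Function.Injective A.mulVec := by
    intro v w hvw
    have : A.mulVec (v - w) = 0 := by
      rw [Matrix.mulVec_sub, hvw, sub_self]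
    have := hker _ this
    exact sub_eq_zero.mp this
  have hunit : IsUnit A := Matrix.mulVec_injective_iff_isUnit.mp hinj
  refine ⟨hunit, ?_⟩
  set w : Fin n → ℝ := A⁻¹.mulVec y with hwdef
  have hAw : A.mulVec w = y := by
    rw [hwdef, Matrix.mulVec_mulVec, Matrix.mul_nonsing_inv A
      ((Matrix.isUnit_iff_isUnit_det A).mp hunit), Matrix.one_mulVec]
  -- scaled solution
  set t : Fin n → ℝ := fun j => w j / x j with htdef
  have hwt : ∀ j, w j = t j * x j := fun j =>
    (div_mul_cancel₀ _ (hx_pos j).ne').symm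
  have heq : ∀ i, y i * t i + ∑ j ∈ Finset.univ.erase i, A i j * x j * t j = y i := by
    intro i
    have := congrFun hAw i
    rw [Matrix.mulVec, dotProduct,
      ← Finset.add_sum_erase _ _ (Finset.mem_univ i)] at this
    calc y i * t i + ∑ j ∈ Finset.univ.erase i, A i j * x j * t j
        = A i i * w i + ∑ j ∈ Finset.univ.erase i, A i j * w j := by
          rw [hwt i, ← hAx i]
          congr 1
          · ring
          · exact Finset.sum_congr rfl fun j _ => by rw [hwt j]; ring
      _ = y i := this
  by_contra hcon
  push_neg at hcon
  obtain ⟨i0, hi0⟩ := hcon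
  have hFn : (Finset.univ : Finset (Fin n)).Nonempty := ⟨i0, Finset.mem_univ i0⟩
  obtain ⟨k, -, hk⟩ := Finset.exists_max_image Finset.univ t hFn
  obtain ⟨i, -, hi⟩ := Finset.exists_min_image Finset.univ t hFn
  set M := t k
  set m := t i
  have hm_nonpos : m ≤ 0 := by
    have h1 : t i0 ≤ 0 := by
      rw [htdef]
      exact div_nonpos_of_nonpos_of_nonneg hi0 (hx_pos i0).le
    exact le_trans (hi i0 (Finset.mem_univ i0)) h1
  -- bound the off-diagonal sums
  have hub : ∀ p, ∑ j ∈ Finset.univ.erase p, A p j * x j * t j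
      ≤ M * ∑ j ∈ Finset.univ.erase p, A p j * x j := by
    intro p
    rw [Finset.mul_sum]
    apply Finset.sum_le_sum
    intro j _
    have := hk j (Finset.mem_univ j)
    nlinarith [mul_nonneg (hA p j) (hx_pos j).le]
  have hlb : ∀ p, m * ∑ j ∈ Finset.univ.erase p, A p j * x j
      ≤ ∑ j ∈ Finset.univ.erase p, A p j * x j * t j := by
    intro p
    rw [Finset.mul_sum]
    apply Finset.sum_le_sum
    intro j _
    have := hi j (Finset.mem_univ j)
    nlinarith [mul_nonneg (hA p j) (hx_pos j).le]
  -- M ≤ 1 - m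
  have hM : M ≤ 1 - m := by
    have h1 := heq k
    have h2 := hlb k
    have h3 : m * ∑ j ∈ Finset.univ.erase k, A k j * x j ≥ m * y k :=
      mul_le_mul_of_nonpos_left (hs k).le hm_nonpos
    have hyk := hy k
    nlinarith
  -- contradiction at the argmin
  have h1 := heq i
  have h2 := hub i
  have h3 : M * ∑ j ∈ Finset.univ.erase i, A i j * x j
      ≤ (1 - m) * ∑ j ∈ Finset.univ.erase i, A i j * x j :=
    mul_le_mul_of_nonneg_right hM (hsnn i)
  have h4 : (1 - m) * ∑ j ∈ Finset.univ.erase i, A i j * x j < (1 - m) * y i := by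
    apply mul_lt_mul_of_pos_left (hs i)
    linarith
  nlinarith [hy i]
end

section
/- If points v_1,...,v_n ∈ R^k (spanning R^k) satisfy the 1/2-sandwich condition, i.e., 1/2 < v_i^T (Σ_j v_j v_j^T)^{-1} v_i ≤ 1 for all i, then there exists a centered ellipsoid passing exactly through v_1,...,v_n, i.e., a positive semidefinite k×k matrix M with v_i^T M v_i = 1 for all i. -/
open Matrix

open scoped BigOperators

lemma dot_sum_mulVec {ι k : Type*} [Fintype ι] [Fintype k] (x z : k → ℝ)
    (M : ι → Matrix k k ℝ) : x ⬝ᵥ (∑ j, M j) *ᵥ z = ∑ j, x ⬝ᵥ (M j) *ᵥ z := by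
  have h1 : (∑ j, M j) *ᵥ z = ∑ j, M j *ᵥ z := by
    ext i
    simp only [Matrix.mulVec, dotProduct, Matrix.sum_apply, Finset.sum_mul,
      Finset.sum_apply]
    exact Finset.sum_comm
  rw [h1]
  simp only [dotProduct, Finset.sum_apply, Finset.mul_sum]
  exact Finset.sum_comm

lemma dot_vmv {k : Type*} [Fintype k] (x y z : k → ℝ) :
    x ⬝ᵥ (vecMulVec y y) *ᵥ z = (x ⬝ᵥ y) * (y ⬝ᵥ z) := by
  have h1 : (vecMulVec y y) *ᵥ z = (y ⬝ᵥ z) • y := by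
    ext i
    simp only [Matrix.mulVec, dotProduct, vecMulVec_apply, Pi.smul_apply,
      smul_eq_mul, Finset.mul_sum, Finset.sum_mul]
    exact Finset.sum_congr rfl fun j _ => by ring
  rw [h1, dotProduct_smul, smul_eq_mul, mul_comm]

lemma sandwich_scalar_contradiction (ti tp li lp : ℝ) (hti : 1/2 < ti) (htp : 1/2 < tp)
    (hti1 : ti ≤ 1) (htp1 : tp ≤ 1) (hli : li < 0)
    (h1 : (1:ℝ) ≤ ti ^ 2 * li + (ti - ti ^ 2) * lp)
    (h2 : tp ^ 2 * lp + (tp - tp ^ 2) * li ≤ 1) : False := by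
  have hf1 : (0:ℝ) ≤ ti - ti ^ 2 := by nlinarith
  have hf2 : (0:ℝ) ≤ tp - tp ^ 2 := by nlinarith
  have hA1 := mul_le_mul_of_nonneg_left h1 (sq_nonneg tp)
  have hB1 := mul_le_mul_of_nonneg_left h2 hf1
  have key : tp ^ 2 - (ti - ti ^ 2)
      ≤ li * (tp ^ 2 * ti ^ 2 - (ti - ti ^ 2) * (tp - tp ^ 2)) := by nlinarith [hA1, hB1]
  have d1 : (1:ℝ)/4 < ti ^ 2 := by nlinarith
  have d2 : (1:ℝ)/4 < tp ^ 2 := by nlinarith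
  have g1 : ti - ti ^ 2 ≤ 1/4 := by nlinarith [sq_nonneg (2 * ti - 1)]
  have g2 : tp - tp ^ 2 ≤ 1/4 := by nlinarith [sq_nonneg (2 * tp - 1)]
  have c2 : (ti - ti ^ 2) * (tp - tp ^ 2) < tp ^ 2 * ti ^ 2 := by
    nlinarith [mul_le_mul g1 g2 hf2 (by norm_num : (0:ℝ) ≤ 1/4)]
  have hneg : li * (tp ^ 2 * ti ^ 2 - (ti - ti ^ 2) * (tp - tp ^ 2)) < 0 :=
    mul_neg_of_neg_of_pos hli (sub_pos.mpr c2)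
  linarith

/-- if points `v₁,…,vₙ` spanning `ℝᵏ` satisfy the 1/2-sandwich condition,
then a centered ellipsoid passes exactly through them. -/
theorem ellipsoid_fitting_of_half_sandwich (n k : ℕ) (v : Fin n → Fin k → ℝ)
    (hspan : Submodule.span ℝ (Set.range v) = ⊤)
    (hsand : ∀ i : Fin n,
      1 / 2 < v i ⬝ᵥ (∑ j : Fin n, Matrix.vecMulVec (v j) (v j))⁻¹.mulVec (v i) ∧
      v i ⬝ᵥ (∑ j : Fin n, Matrix.vecMulVec (v j) (v j))⁻¹.mulVec (v i) ≤ 1) :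
    ∃ M : Matrix (Fin k) (Fin k) ℝ, M.PosSemidef ∧ ∀ i, v i ⬝ᵥ M.mulVec (v i) = 1 := by
  classical
  rcases Nat.eq_zero_or_pos n with rfl | hn
  · refine ⟨0, ⟨by simp [Matrix.IsHermitian], fun x => by simp⟩, fun i => i.elim0⟩
  haveI : Nonempty (Fin n) := Fin.pos_iff_nonempty.mp hn
  set A : Matrix (Fin k) (Fin k) ℝ := ∑ j : Fin n, vecMulVec (v j) (v j) with hA
  set B : Matrix (Fin k) (Fin k) ℝ := A⁻¹ with hB
  set b : Fin n → Fin k → ℝ := fun i => B *ᵥ (v i) with hb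
  set τ : Fin n → ℝ := fun i => v i ⬝ᵥ b i with hτ
  have hτhalf : ∀ i, 1/2 < τ i := fun i => (hsand i).1
  have hτ1 : ∀ i, τ i ≤ 1 := fun i => (hsand i).2
  have hτpos : ∀ i, 0 < τ i := fun i => lt_trans (by norm_num) (hτhalf i)
  -- A invertible
  have hdet : IsUnit A.det := by
    by_contra h
    have h0 := hτhalf (Classical.arbitrary (Fin n))
    rw [hτ] at h0
    simp only [hb, hB, Matrix.nonsing_inv_apply_not_isUnit _ h] at h0
    simp at h0
    linarith
  -- symmetry
  have hAT : Aᵀ = A := by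
    rw [hA]
    ext i j
    simp only [Matrix.transpose_apply, Matrix.sum_apply, vecMulVec_apply]
    exact Finset.sum_congr rfl fun l _ => mul_comm _ _
  have hBT : Bᵀ = B := by rw [hB, Matrix.transpose_nonsing_inv, hAT]
  set q : Fin n → Fin n → ℝ := fun i j => v i ⬝ᵥ b j with hq
  have hqsymm : ∀ i j, q i j = b i ⬝ᵥ v j := by
    intro i j
    rw [hq]
    simp only [hb]
    rw [Matrix.dotProduct_mulVec, ← hBT, Matrix.vecMul_transpose, hBT]
  have hdiag : ∀ i, q i i = τ i := fun i => rfl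
  -- row sums
  have hrow : ∀ i, ∑ j, (q i j)^2 = τ i := by
    intro i
    have hAb : A *ᵥ b i = v i := by
      rw [hb]
      simp only [hB]
      rw [Matrix.mulVec_mulVec, Matrix.mul_nonsing_inv _ hdet, Matrix.one_mulVec]
    calc ∑ j, (q i j)^2
        = ∑ j, b i ⬝ᵥ (vecMulVec (v j) (v j)) *ᵥ (b i) := by
          refine Finset.sum_congr rfl fun j _ => ?_
          rw [dot_vmv, hqsymm i j, sq, dotProduct_comm (v j) (b i)]
      _ = b i ⬝ᵥ A *ᵥ (b i) := by rw [hA, dot_sum_mulVec]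
      _ = τ i := by rw [hAb, dotProduct_comm]
  have hoff : ∀ i, ∑ j ∈ Finset.univ.erase i, (q i j)^2 = τ i - (τ i)^2 := by
    intro i
    have h := hrow i
    rw [← Finset.add_sum_erase _ _ (Finset.mem_univ i), hdiag i] at h
    linarith
  -- the matrix Q
  set Q : Matrix (Fin n) (Fin n) ℝ := Matrix.of (fun i j => (q i j)^2) with hQ
  -- injectivity of Q
  have hinj : Function.Injective Q.mulVecLin := by
    rw [← LinearMap.ker_eq_bot, LinearMap.ker_eq_bot']
    intro x hx
    by_contra hx0
    obtain ⟨i, -, hmax⟩ := Finset.exists_max_image Finset.univ (fun j => |x j|)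
      ⟨Classical.arbitrary (Fin n), Finset.mem_univ _⟩
    have hxi : 0 < |x i| := by
      obtain ⟨j, hj⟩ := Function.ne_iff.mp hx0
      exact lt_of_lt_of_le (abs_pos.mpr hj) (hmax j (Finset.mem_univ j))
    have hxe : ∑ j, (q i j)^2 * x j = 0 := by
      have := congrFun hx i
      simpa [Matrix.mulVecLin_apply, Matrix.mulVec, dotProduct, hQ] using this
    rw [← Finset.add_sum_erase _ _ (Finset.mem_univ i), hdiag i] at hxe
    have habs : (τ i)^2 * |x i| ≤ (τ i - (τ i)^2) * |x i| := by
      have h1 : (τ i)^2 * |x i| = |∑ j ∈ Finset.univ.erase i, (q i j)^2 * x j| := by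
        rw [show ∑ j ∈ Finset.univ.erase i, (q i j)^2 * x j = -((τ i)^2 * x i) by linarith]
        rw [abs_neg, abs_mul, abs_of_nonneg (sq_nonneg (τ i))]
      rw [h1, ← hoff i, Finset.sum_mul]
      refine le_trans (Finset.abs_sum_le_sum_abs _ _) ?_
      refine Finset.sum_le_sum fun j _ => ?_
      rw [abs_mul, abs_of_nonneg (sq_nonneg _)]
      exact mul_le_mul_of_nonneg_left (hmax j (Finset.mem_univ j)) (sq_nonneg _)
    have hq2 : τ i ^ 2 ≤ τ i - τ i ^ 2 := le_of_mul_le_mul_right habs hxi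
    have h3 : (0:ℝ) < τ i * (2 * τ i - 1) :=
      mul_pos (hτpos i) (by linarith [hτhalf i])
    nlinarith [h3, hq2]
  obtain ⟨lam, hlam⟩ := (LinearMap.injective_iff_surjective).mp hinj (fun _ => 1)
  have hlam' : ∀ i, ∑ j, (q i j)^2 * lam j = 1 := by
    intro i
    have := congrFun hlam i
    simpa [Matrix.mulVecLin_apply, Matrix.mulVec, dotProduct, hQ] using this
  -- nonnegativity of lam
  have hnn : ∀ i, 0 ≤ lam i := by
    by_contra h
    push_neg at h
    obtain ⟨i₁, hi₁⟩ := h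
    obtain ⟨i, -, hmin⟩ := Finset.exists_min_image Finset.univ lam
      ⟨i₁, Finset.mem_univ _⟩
    obtain ⟨p, -, hmax⟩ := Finset.exists_max_image Finset.univ lam
      ⟨i₁, Finset.mem_univ _⟩
    have hli : lam i < 0 := lt_of_le_of_lt (hmin i₁ (Finset.mem_univ _)) hi₁
    have h1 : (1:ℝ) ≤ (τ i)^2 * lam i + (τ i - (τ i)^2) * lam p := by
      have := hlam' i
      rw [← Finset.add_sum_erase _ _ (Finset.mem_univ i), hdiag i] at this
      have hle : ∑ j ∈ Finset.univ.erase i, (q i j)^2 * lam j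
          ≤ ∑ j ∈ Finset.univ.erase i, (q i j)^2 * lam p := by
        refine Finset.sum_le_sum fun j _ => ?_
        exact mul_le_mul_of_nonneg_left (hmax j (Finset.mem_univ j)) (sq_nonneg _)
      rw [← Finset.sum_mul, hoff i] at hle
      linarith
    have h2 : (τ p)^2 * lam p + (τ p - (τ p)^2) * lam i ≤ 1 := by
      have := hlam' p
      rw [← Finset.add_sum_erase _ _ (Finset.mem_univ p), hdiag p] at this
      have hle : ∑ j ∈ Finset.univ.erase p, (q p j)^2 * lam i
          ≤ ∑ j ∈ Finset.univ.erase p, (q p j)^2 * lam j := by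
        refine Finset.sum_le_sum fun j _ => ?_
        exact mul_le_mul_of_nonneg_left (hmin j (Finset.mem_univ j)) (sq_nonneg _)
      rw [← Finset.sum_mul, hoff p] at hle
      linarith
    exact sandwich_scalar_contradiction (τ i) (τ p) (lam i) (lam p)
      (hτhalf i) (hτhalf p) (hτ1 i) (hτ1 p) hli h1 h2
  -- construct M
  refine ⟨∑ j, lam j • vecMulVec (b j) (b j), Matrix.PosSemidef.of_dotProduct_mulVec_nonneg ?_ ?_, ?_⟩
  · show _ = _
    ext i j
    simp only [Matrix.conjTranspose_apply, Matrix.sum_apply, Matrix.smul_apply,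
      vecMulVec_apply, smul_eq_mul, star_trivial]
    exact Finset.sum_congr rfl fun l _ => by ring
  · intro x
    have hx : star x = x := by simp
    rw [hx]
    have : x ⬝ᵥ (∑ j, lam j • vecMulVec (b j) (b j)) *ᵥ x
        = ∑ j, lam j * ((x ⬝ᵥ b j) * (b j ⬝ᵥ x)) := by
      rw [dot_sum_mulVec]
      refine Finset.sum_congr rfl fun j _ => ?_
      rw [Matrix.smul_mulVec, dotProduct_smul, smul_eq_mul, dot_vmv]
    rw [this]
    refine Finset.sum_nonneg fun j _ => ?_
    rw [dotProduct_comm (b j) x, ← sq]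
    exact mul_nonneg (hnn j) (sq_nonneg _)
  · intro i
    have : v i ⬝ᵥ (∑ j, lam j • vecMulVec (b j) (b j)) *ᵥ (v i)
        = ∑ j, lam j * ((v i ⬝ᵥ b j) * (b j ⬝ᵥ v i)) := by
      rw [dot_sum_mulVec]
      refine Finset.sum_congr rfl fun j _ => ?_
      rw [Matrix.smul_mulVec, dotProduct_smul, smul_eq_mul, dot_vmv]
    rw [this, ← hlam' i]
    refine Finset.sum_congr rfl fun j _ => ?_
    rw [dotProduct_comm (b j) (v i)]
    show lam j * (q i j * q i j) = q i j ^ 2 * lam j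
    ring
end

section
/- Let P be a partition of {1,...,n} and u ∈ R^n nonzero. The one-dimensional subspace span{u} is P-realizable if and only if u is P-balanced. -/
open scoped BigOperators Matrix



lemma exists_unit_aux (a : ℝ) (ha : 0 ≤ a) (z : ℂ) (t : ℝ)
    (h1 : |a - ‖z‖| ≤ t) (h2 : t ≤ a + ‖z‖) :
    ∃ w : ℂ, ‖w‖ = 1 ∧ ‖(a * w + z)‖ = t := by
  rcases eq_or_ne z 0 with rfl | hz
  · simp only [norm_zero, sub_zero, add_zero, abs_of_nonneg ha] at h1 h2
    refine ⟨1, by simp, ?_⟩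
    simp [le_antisymm h2 h1, abs_of_nonneg ha]
  · set ρ := ‖z‖ with hρ
    have hρ0 : 0 < ρ := norm_pos_iff.mpr hz
    set f : ℝ → ℝ := fun θ => ‖(a * Complex.exp (θ * Complex.I) + ρ)‖ with hf
    have hcont : Continuous f := by
      apply continuous_norm.comp
      continuity
    have hf0 : f 0 = a + ρ := by
      simp only [hf, Complex.ofReal_zero, zero_mul, Complex.exp_zero, mul_one]
      rw [← Complex.ofReal_add, Complex.norm_real, Real.norm_eq_abs, abs_of_nonneg (by positivity)]
    have hfπ : f Real.pi = |a - ρ| := by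
      simp only [hf, Complex.ofReal_mul]
      rw [show ((Real.pi : ℝ) : ℂ) * Complex.I = Real.pi * Complex.I by norm_cast,
        Complex.exp_pi_mul_I]
      rw [show (a : ℂ) * (-1) + (ρ : ℂ) = ((ρ - a : ℝ) : ℂ) by push_cast; ring,
        Complex.norm_real, Real.norm_eq_abs, abs_sub_comm]
    have hmem : t ∈ Set.Icc (f Real.pi) (f 0) := by
      rw [hf0, hfπ]; exact ⟨h1, h2⟩
    obtain ⟨θ, _, hθ⟩ := intermediate_value_Icc' Real.pi_pos.le hcont.continuousOn hmem
    refine ⟨Complex.exp (θ * Complex.I) * (z / ρ), ?_, ?_⟩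
    · rw [norm_mul, Complex.norm_exp_ofReal_mul_I, norm_div, Complex.norm_real, Real.norm_eq_abs,
        abs_of_nonneg hρ0.le, ← hρ, div_self hρ0.ne', one_mul]
    · have key : (a : ℂ) * (Complex.exp (θ * Complex.I) * (z / ρ)) + z
          = (a * Complex.exp (θ * Complex.I) + ρ) * (z / ρ) := by
        have : (ρ:ℂ) ≠ 0 := by exact_mod_cast hρ0.ne'
        field_simp
      rw [key, norm_mul, norm_div, Complex.norm_real, Real.norm_eq_abs, abs_of_nonneg hρ0.le, ← hρ,
        div_self hρ0.ne', mul_one]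
      exact hθ


lemma polygon_exists {ι : Type*} [DecidableEq ι] (s : Finset ι) :
    ∀ (r : ι → ℝ) (t : ℝ), (∀ b ∈ s, 0 ≤ r b) → 0 ≤ t → t ≤ ∑ b ∈ s, r b →
    (∀ b ∈ s, r b ≤ t + ∑ c ∈ s.erase b, r c) →
    ∃ v : ι → ℂ, (∀ b ∈ s, ‖v b‖ = 1) ∧
      ‖∑ b ∈ s, (r b : ℂ) * v b‖ = t := by
  induction s using Finset.induction_on with
  | empty =>
    intro r t _ ht0 htS _
    refine ⟨fun _ => 1, by simp, ?_⟩
    simp only [Finset.sum_empty, norm_zero]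
    simp only [Finset.sum_empty] at htS
    linarith
  | @insert a s ha ih =>
    intro r t hr ht0 htS hb
    have hra : 0 ≤ r a := hr a (Finset.mem_insert_self a s)
    have hrs : ∀ b ∈ s, 0 ≤ r b := fun b hbs => hr b (Finset.mem_insert_of_mem hbs)
    have hS'0 : 0 ≤ ∑ b ∈ s, r b := Finset.sum_nonneg hrs
    set S' := ∑ b ∈ s, r b with hS'
    have hsum : ∑ b ∈ insert a s, r b = r a + S' := Finset.sum_insert ha
    have hba : r a ≤ t + S' := by
      have := hb a (Finset.mem_insert_self a s)
      rwa [Finset.erase_insert ha] at this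
    have htS' : t ≤ r a + S' := by rw [← hsum]; exact htS
    set t' := min S' (t + r a) with ht'
    have ht'0 : 0 ≤ t' := le_min hS'0 (by linarith)
    have ht'S : t' ≤ S' := min_le_left _ _
    have hb' : ∀ b ∈ s, r b ≤ t' + ∑ c ∈ s.erase b, r c := by
      intro b hbs
      have herase : r b + ∑ c ∈ s.erase b, r c = S' := Finset.add_sum_erase s r hbs
      have hbS' : r b ≤ S' := Finset.single_le_sum hrs hbs
      have hbfull : r b ≤ t + ∑ c ∈ (insert a s).erase b, r c := hb b (Finset.mem_insert_of_mem hbs)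
      have hne : b ≠ a := fun h => ha (h ▸ hbs)
      have : (insert a s).erase b = insert a (s.erase b) := by
        rw [Finset.erase_insert_of_ne hne.symm]
      rw [this, Finset.sum_insert (fun h => ha (Finset.mem_of_mem_erase h))] at hbfull
      have h1 : r b ≤ S' + ∑ c ∈ s.erase b, r c := by linarith
      have h2 : r b ≤ (t + r a) + ∑ c ∈ s.erase b, r c := by linarith
      rcases min_cases S' (t + r a) with ⟨hm, _⟩ | ⟨hm, _⟩
      · rw [ht', hm]; exact h1
      · rw [ht', hm]; exact h2
    obtain ⟨v', hv'1, hv'abs⟩ := ih r t' hrs ht'0 ht'S hb'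
    set z := ∑ b ∈ s, (r b : ℂ) * v' b with hz
    have h1 : |r a - ‖z‖| ≤ t := by
      rw [hv'abs, abs_le]
      constructor
      · have : t' ≤ t + r a := min_le_right _ _
        linarith
      · have : r a - t ≤ t' := le_min (by linarith) (by linarith)
        linarith
    have h2 : t ≤ r a + ‖z‖ := by
      rw [hv'abs]
      have : t - r a ≤ t' := le_min (by linarith) (by linarith)
      linarith
    obtain ⟨w, hw1, hwt⟩ := exists_unit_aux (r a) hra z t h1 h2
    refine ⟨fun b => if b = a then w else v' b, ?_, ?_⟩
    · intro b hbs
      rcases Finset.mem_insert.mp hbs with rfl | hbs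
      · simp [hw1]
      · have hne : b ≠ a := fun h => ha (h ▸ hbs)
        simp [hne, hv'1 b hbs]
    · rw [Finset.sum_insert ha]
      simp only [if_pos rfl]
      have : ∑ b ∈ s, (r b : ℂ) * (if b = a then w else v' b) = z := by
        apply Finset.sum_congr rfl
        intro b hbs
        have hne : b ≠ a := fun h => ha (h ▸ hbs)
        simp [hne]
      rw [this]
      exact hwt


lemma re_conj_sum_mul {ι : Type*} (s : Finset ι) (c : ι → ℝ) (w : ι → ℂ) :
    ∑ i ∈ s, ∑ j ∈ s, (c i * c j) * ((starRingEnd ℂ) (w i) * w j).re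
      = Complex.normSq (∑ i ∈ s, (c i : ℂ) * w i) := by
  have key : (starRingEnd ℂ) (∑ i ∈ s, (c i : ℂ) * w i) * (∑ j ∈ s, (c j : ℂ) * w j)
      = ∑ i ∈ s, ∑ j ∈ s, ((c i * c j : ℝ) : ℂ) * ((starRingEnd ℂ) (w i) * w j) := by
    rw [map_sum, Finset.sum_mul_sum]
    refine Finset.sum_congr rfl fun i _ => Finset.sum_congr rfl fun j _ => ?_
    rw [map_mul, Complex.conj_ofReal]
    push_cast
    ring
  have h2 : Complex.normSq (∑ i ∈ s, (c i : ℂ) * w i)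
      = ((starRingEnd ℂ) (∑ i ∈ s, (c i : ℂ) * w i) * (∑ j ∈ s, (c j : ℂ) * w j)).re := by
    rw [mul_comm, Complex.mul_conj]
    simp
  rw [h2, key, Complex.re_sum]
  refine Finset.sum_congr rfl fun i _ => ?_
  rw [Complex.re_sum]
  refine Finset.sum_congr rfl fun j _ => ?_
  rw [Complex.re_ofReal_mul]



lemma euclid_sum_apply {n : ℕ} {ι : Type*} (s : Finset ι) (f : ι → EuclideanSpace ℝ (Fin n))
    (k : Fin n) : (∑ i ∈ s, f i) k = ∑ i ∈ s, f i k := by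
  induction s using Finset.cons_induction with
  | empty => simp
  | cons a s ha ih => rw [Finset.sum_cons, Finset.sum_cons, PiLp.add_apply, ih]

/-- `U` is `𝒫`-realizable (the partition of `{1,…,n}` is encoded by the block-index map
`π : Fin n → Fin m`, whose fibers are the blocks): some PSD matrix `Y` whose principal
submatrices indexed by the blocks are identity matrices has nullspace containing `U`. -/
def PRealizable {n m : ℕ} (π : Fin n → Fin m) (U : Submodule ℝ (EuclideanSpace ℝ (Fin n))) :
    Prop :=
  ∃ Y : Matrix (Fin n) (Fin n) ℝ, Y.PosSemidef ∧
    (∀ i j, π i = π j → Y i j = if i = j then 1 else 0) ∧ ∀ u ∈ U, Y.mulVec u = 0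

/-- for nonzero `u`, `span{u}` is `𝒫`-realizable iff `u` is `𝒫`-balanced. -/
theorem span_singleton_pRealizable_iff_pBalanced (n m : ℕ) (π : Fin n → Fin m)
    (u : EuclideanSpace ℝ (Fin n)) (hu : u ≠ 0) :
    PRealizable π (Submodule.span ℝ {u}) ↔
      ∀ b : Fin m,
        Real.sqrt (∑ i ∈ Finset.univ.filter (fun i => π i = b), (u i)^2) ≤
          ∑ c ∈ Finset.univ.erase b,
            Real.sqrt (∑ i ∈ Finset.univ.filter (fun i => π i = c), (u i)^2) := by
  constructor
  · intro h b
    obtain ⟨Y, hY, hblk, hnull⟩ := h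
    have hYu : Y.mulVec u = 0 := hnull u (Submodule.mem_span_singleton_self u)
    obtain ⟨B, rfl⟩ : ∃ B : Matrix (Fin n) (Fin n) ℝ, Y = Bᴴ * B := by
        open scoped MatrixOrder in exact CStarAlgebra.nonneg_iff_eq_star_mul_self.mp hY.nonneg
    have hBu : B.mulVec u = 0 := by
      have h0 : dotProduct u ((Bᴴ * B).mulVec u) = 0 := by
        rw [hYu, dotProduct_zero]
      rw [← Matrix.mulVec_mulVec, Matrix.dotProduct_mulVec, Matrix.vecMul_conjTranspose] at h0
      simp only [star_trivial] at h0
      exact dotProduct_self_eq_zero.mp h0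
    set F : Fin m → Finset (Fin n) := fun c => Finset.univ.filter (fun i => π i = c) with hF
    set r : Fin m → ℝ := fun c => Real.sqrt (∑ i ∈ F c, (u i)^2) with hr
    set y : Fin n → EuclideanSpace ℝ (Fin n) := fun i => WithLp.toLp 2 (fun k => B k i) with hy
    set s : Fin m → EuclideanSpace ℝ (Fin n) := fun c => ∑ i ∈ F c, u i • y i with hs
    have key : ∀ c, ∑ k : Fin n, (s c k)^2 = ∑ i ∈ F c, (u i)^2 := by
      intro c
      have hsck : ∀ k, s c k = ∑ i ∈ F c, u i * B k i := by
        intro k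
        show (∑ i ∈ F c, u i • y i) k = _
        rw [euclid_sum_apply]
        exact Finset.sum_congr rfl fun i _ => by rw [PiLp.smul_apply, smul_eq_mul]
      calc ∑ k : Fin n, (s c k)^2
          = ∑ k : Fin n, ∑ i ∈ F c, ∑ j ∈ F c, (u i * u j) * (B k i * B k j) := by
            refine Finset.sum_congr rfl fun k _ => ?_
            rw [hsck, sq, Finset.sum_mul_sum]
            exact Finset.sum_congr rfl fun i _ => Finset.sum_congr rfl fun j _ => by ring
        _ = ∑ i ∈ F c, ∑ j ∈ F c, (u i * u j) * ∑ k : Fin n, (B k i * B k j) := by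
            rw [Finset.sum_comm]
            refine Finset.sum_congr rfl fun i _ => ?_
            rw [Finset.sum_comm]
            refine Finset.sum_congr rfl fun j _ => ?_
            rw [Finset.mul_sum]
        _ = ∑ i ∈ F c, ∑ j ∈ F c, (u i * u j) * (if i = j then 1 else 0) := by
            refine Finset.sum_congr rfl fun i hi => Finset.sum_congr rfl fun j hj => ?_
            congr 1
            have hπ : π i = π j := by
              simp only [hF, Finset.mem_filter] at hi hj
              rw [hi.2, hj.2]
            rw [← hblk i j hπ, Matrix.mul_apply]
            exact Finset.sum_congr rfl fun k _ => by
              rw [Matrix.conjTranspose_apply, star_trivial]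
        _ = ∑ i ∈ F c, (u i)^2 := by
            refine Finset.sum_congr rfl fun i hi => ?_
            simp only [mul_ite, mul_one, mul_zero]
            rw [Finset.sum_ite_eq (F c) i (fun j => u i * u j), if_pos hi, sq]
    have hnorm : ∀ c, ‖s c‖ = r c := by
      intro c
      rw [EuclideanSpace.norm_eq, hr]
      congr 1
      rw [← key c]
      exact Finset.sum_congr rfl fun k _ => by rw [Real.norm_eq_abs, sq_abs]
    have hsum0 : ∑ c : Fin m, s c = 0 := by
      have h1 : ∑ c : Fin m, s c = ∑ i : Fin n, u i • y i := by
        rw [hs]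
        exact Finset.sum_fiberwise Finset.univ π (fun i => u i • y i)
      rw [h1]
      ext k
      have h2 := congrFun hBu k
      simp only [Matrix.mulVec, dotProduct, Pi.zero_apply] at h2
      calc (∑ i : Fin n, u i • y i) k = ∑ i : Fin n, B k i * u i := by
            rw [euclid_sum_apply]
            exact Finset.sum_congr rfl fun i _ => by
              rw [PiLp.smul_apply, smul_eq_mul, mul_comm]
        _ = 0 := h2
    have hsb : s b = - ∑ c ∈ Finset.univ.erase b, s c := by
      have := Finset.add_sum_erase Finset.univ s (Finset.mem_univ b)
      rw [hsum0] at this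
      exact eq_neg_of_add_eq_zero_left this
    calc r b = ‖s b‖ := (hnorm b).symm
      _ = ‖∑ c ∈ Finset.univ.erase b, s c‖ := by rw [hsb, norm_neg]
      _ ≤ ∑ c ∈ Finset.univ.erase b, ‖s c‖ := norm_sum_le _ _
      _ = ∑ c ∈ Finset.univ.erase b, r c := Finset.sum_congr rfl fun c _ => hnorm c
  · intro hbal
    classical
    set F : Fin m → Finset (Fin n) := fun b => Finset.univ.filter (fun i => π i = b) with hF
    set r : Fin m → ℝ := fun b => Real.sqrt (∑ i ∈ F b, (u i)^2) with hr
    have hr0 : ∀ b, 0 ≤ r b := fun b => Real.sqrt_nonneg _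
    have hsumsq : ∀ b, 0 ≤ ∑ i ∈ F b, (u i)^2 :=
      fun b => Finset.sum_nonneg fun i _ => sq_nonneg _
    have hrsq : ∀ b, r b ^ 2 = ∑ i ∈ F b, (u i)^2 := fun b => Real.sq_sqrt (hsumsq b)
    have hzero : ∀ b, r b = 0 → ∀ i ∈ F b, u i = 0 := by
      intro b hb i hi
      have h1 : ∑ i ∈ F b, (u i)^2 = 0 := by rw [← hrsq b, hb]; ring
      have h2 := (Finset.sum_eq_zero_iff_of_nonneg (fun i _ => sq_nonneg (u i))).mp h1 i hi
      exact pow_eq_zero_iff (two_ne_zero) |>.mp h2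
    have hmemF : ∀ i, i ∈ F (π i) := fun i => Finset.mem_filter.mpr ⟨Finset.mem_univ i, rfl⟩
    obtain ⟨v, hv1, hv0⟩ := polygon_exists Finset.univ r 0 (fun b _ => hr0 b) le_rfl
      (Finset.sum_nonneg fun b _ => hr0 b)
      (fun b _ => by rw [zero_add]; exact hbal b)
    have hvsum : ∑ b : Fin m, (r b : ℂ) * v b = 0 := by
      rwa [norm_eq_zero] at hv0
    set a : Fin n → ℝ := fun i => u i / r (π i) with ha
    have hau : ∀ i, a i * r (π i) = u i := by
      intro i
      by_cases h : r (π i) = 0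
      · rw [h, mul_zero]
        exact (hzero _ h i (hmemF i)).symm
      · rw [ha]
        field_simp
    have haru : ∀ b, ∑ i ∈ F b, a i * u i = r b := by
      intro b
      by_cases h : r b = 0
      · rw [h]
        apply Finset.sum_eq_zero
        intro i hi
        rw [hzero b h i hi, mul_zero]
      · have step : ∀ i ∈ F b, a i * u i = (u i)^2 / r b := by
          intro i hi
          have hpi : π i = b := (Finset.mem_filter.mp hi).2
          rw [ha]
          simp only [hpi]
          ring
        rw [Finset.sum_congr rfl step, ← Finset.sum_div, ← hrsq b, sq, mul_div_assoc,
          div_self h, mul_one]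
    have ha2 : ∀ b, ∑ i ∈ F b, (a i)^2 ≤ 1 := by
      intro b
      by_cases h : r b = 0
      · have : ∀ i ∈ F b, (a i)^2 = 0 := by
          intro i hi
          have hpi : π i = b := (Finset.mem_filter.mp hi).2
          rw [ha]
          simp only [hpi, hzero b h i hi]
          norm_num
        rw [Finset.sum_congr rfl this, Finset.sum_const, smul_zero]
        norm_num
      · have step : ∀ i ∈ F b, (a i)^2 = (u i)^2 / r b ^ 2 := by
          intro i hi
          have hpi : π i = b := (Finset.mem_filter.mp hi).2
          rw [ha]
          simp only [hpi]
          rw [div_pow]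
        rw [Finset.sum_congr rfl step, ← Finset.sum_div, ← hrsq b, div_self (pow_ne_zero 2 h)]
    set V : Fin m → Fin m → ℝ := fun b c => ((starRingEnd ℂ) (v b) * v c).re with hV
    have hVbb : ∀ b, V b b = 1 := by
      intro b
      show ((starRingEnd ℂ) (v b) * v b).re = 1
      rw [mul_comm, Complex.mul_conj, Complex.ofReal_re, Complex.normSq_eq_norm_sq,
        hv1 b (Finset.mem_univ b), one_pow]
    have hVsymm : ∀ b c, V b c = V c b := by
      intro b c
      show ((starRingEnd ℂ) (v b) * v c).re = ((starRingEnd ℂ) (v c) * v b).re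
      simp only [Complex.mul_re, Complex.conj_re, Complex.conj_im]
      ring
    have hVr : ∀ b, ∑ c : Fin m, V b c * r c = 0 := by
      intro b
      have step : ∑ c : Fin m, V b c * r c
          = ((starRingEnd ℂ) (v b) * ∑ c : Fin m, (r c : ℂ) * v c).re := by
        rw [Finset.mul_sum, Complex.re_sum]
        refine Finset.sum_congr rfl fun c _ => ?_
        rw [show (starRingEnd ℂ) (v b) * ((r c : ℂ) * v c)
            = (r c : ℂ) * ((starRingEnd ℂ) (v b) * v c) by ring, Complex.re_ofReal_mul]
        ring
      rw [step, hvsum, mul_zero, Complex.zero_re]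
    have hsum_block : ∀ (b : Fin m) (g : Fin n → ℝ),
        (∑ j : Fin n, if b = π j then g j else 0) = ∑ j ∈ F b, g j := by
      intro b g
      rw [Finset.sum_filter]
      refine Finset.sum_congr rfl fun j _ => ?_
      by_cases h : π j = b
      · rw [if_pos h, if_pos h.symm]
      · rw [if_neg h, if_neg (fun hh => h hh.symm)]
    set Y : Matrix (Fin n) (Fin n) ℝ := fun i j => a i * a j * V (π i) (π j) +
        (if π i = π j then (if i = j then (1:ℝ) else 0) - a i * a j else 0) with hY
    have hblk : ∀ i j, π i = π j → Y i j = if i = j then 1 else 0 := by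
      intro i j hπ
      show a i * a j * V (π i) (π j) + _ = _
      rw [if_pos hπ, hπ, hVbb (π j)]
      ring
    have hYu0 : Y *ᵥ u = 0 := by
      funext i
      show ∑ j : Fin n, Y i j * u j = 0
      have split : ∀ j, Y i j * u j = a i * (V (π i) (π j) * (a j * u j)) +
          (if π i = π j then ((if i = j then (1:ℝ) else 0) - a i * a j) * u j else 0) := by
        intro j
        show (a i * a j * V (π i) (π j) + _) * u j = _
        by_cases h : π i = π j
        · rw [if_pos h, if_pos h]; ring
        · rw [if_neg h, if_neg h]; ring
      rw [Finset.sum_congr rfl (fun j _ => split j), Finset.sum_add_distrib]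
      have hS1 : ∑ j : Fin n, a i * (V (π i) (π j) * (a j * u j)) = 0 := by
        rw [← Finset.mul_sum]
        have : ∑ j : Fin n, V (π i) (π j) * (a j * u j)
            = ∑ c : Fin m, ∑ j ∈ F c, V (π i) (π j) * (a j * u j) :=
          (Finset.sum_fiberwise Finset.univ π _).symm
        rw [this]
        have step : ∀ c : Fin m, ∑ j ∈ F c, V (π i) (π j) * (a j * u j) = V (π i) c * r c := by
          intro c
          rw [← haru c, Finset.mul_sum]
          refine Finset.sum_congr rfl fun j hj => ?_
          rw [(Finset.mem_filter.mp hj).2]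
        rw [Finset.sum_congr rfl (fun c _ => step c), hVr (π i), mul_zero]
      have hS2 : ∑ j : Fin n,
          (if π i = π j then ((if i = j then (1:ℝ) else 0) - a i * a j) * u j else 0) = 0 := by
        have := hsum_block (π i) (fun j => ((if i = j then (1:ℝ) else 0) - a i * a j) * u j)
        rw [this]
        have e1 : ∀ j ∈ F (π i), ((if i = j then (1:ℝ) else 0) - a i * a j) * u j
            = (if i = j then u j else 0) - a i * (a j * u j) := by
          intro j _
          by_cases h : i = j
          · rw [if_pos h, if_pos h]; ring
          · rw [if_neg h, if_neg h]; ring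
        rw [Finset.sum_congr rfl e1, Finset.sum_sub_distrib,
          Finset.sum_ite_eq (F (π i)) i (fun j => u j), if_pos (hmemF i), ← Finset.mul_sum,
          haru (π i), hau i, sub_self]
      rw [hS1, hS2, add_zero]
    have hherm : Y.IsHermitian := by
      show Y.conjTranspose = Y
      ext i j
      rw [Matrix.conjTranspose_apply, star_trivial]
      show a j * a i * V (π j) (π i) + _ = a i * a j * V (π i) (π j) + _
      rw [hVsymm (π j) (π i)]
      by_cases h : π i = π j
      · rw [if_pos h, if_pos h.symm]
        by_cases hij : i = j
        · rw [if_pos hij, if_pos hij.symm]; ring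
        · rw [if_neg hij, if_neg (fun hh => hij hh.symm)]; ring
      · rw [if_neg h, if_neg (fun hh => h hh.symm)]; ring
    have hquad : ∀ x : Fin n → ℝ, 0 ≤ dotProduct (star x) (Y *ᵥ x) := by
      intro x
      rw [star_trivial]
      set T : Fin m → ℝ := fun b => ∑ j ∈ F b, a j * x j with hT
      have split : ∀ i j, x i * (Y i j * x j)
          = (x i * a i) * (x j * a j) * V (π i) (π j) +
            (if π i = π j then x i * (((if i = j then (1:ℝ) else 0) - a i * a j) * x j)
              else 0) := by
        intro i j
        show x i * ((a i * a j * V (π i) (π j) + _) * x j) = _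
        by_cases h : π i = π j
        · rw [if_pos h, if_pos h]; ring
        · rw [if_neg h, if_neg h]; ring
      have expand : dotProduct x (Y *ᵥ x) = ∑ i : Fin n, ∑ j : Fin n, x i * (Y i j * x j) := by
        refine Finset.sum_congr rfl fun i _ => ?_
        show x i * ∑ j : Fin n, Y i j * x j = _
        rw [Finset.mul_sum]
      rw [expand]
      rw [Finset.sum_congr rfl (fun i _ => Finset.sum_congr rfl (fun j _ => split i j))]
      rw [Finset.sum_congr rfl (fun i (_ : i ∈ Finset.univ) => Finset.sum_add_distrib),
        Finset.sum_add_distrib]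
      have hS1 : 0 ≤ ∑ i : Fin n, ∑ j : Fin n, (x i * a i) * (x j * a j) * V (π i) (π j) := by
        rw [re_conj_sum_mul Finset.univ (fun i => x i * a i) (fun i => v (π i))]
        exact Complex.normSq_nonneg _
      have hS2 : 0 ≤ ∑ i : Fin n, ∑ j : Fin n,
          (if π i = π j then x i * (((if i = j then (1:ℝ) else 0) - a i * a j) * x j) else 0) := by
        have inner : ∀ i : Fin n, ∑ j : Fin n,
            (if π i = π j then x i * (((if i = j then (1:ℝ) else 0) - a i * a j) * x j) else 0)
            = x i * x i - x i * a i * T (π i) := by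
          intro i
          rw [hsum_block (π i) (fun j => x i * (((if i = j then (1:ℝ) else 0) - a i * a j) * x j))]
          have e1 : ∀ j ∈ F (π i), x i * (((if i = j then (1:ℝ) else 0) - a i * a j) * x j)
              = (if i = j then x i * x j else 0) - x i * a i * (a j * x j) := by
            intro j _
            by_cases h : i = j
            · rw [if_pos h, if_pos h]; ring
            · rw [if_neg h, if_neg h]; ring
          rw [Finset.sum_congr rfl e1, Finset.sum_sub_distrib,
            Finset.sum_ite_eq (F (π i)) i (fun j => x i * x j), if_pos (hmemF i),
            ← Finset.mul_sum]
        rw [Finset.sum_congr rfl (fun i _ => inner i)]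
        have regroup : ∑ i : Fin n, (x i * x i - x i * a i * T (π i))
            = ∑ b : Fin m, ∑ i ∈ F b, (x i * x i - x i * a i * T (π i)) :=
          (Finset.sum_fiberwise Finset.univ π _).symm
        rw [regroup]
        refine Finset.sum_nonneg fun b _ => ?_
        have e2 : ∀ i ∈ F b, x i * x i - x i * a i * T (π i)
            = x i * x i - (a i * x i) * T b := by
          intro i hi
          rw [(Finset.mem_filter.mp hi).2]
          ring
        rw [Finset.sum_congr rfl e2, Finset.sum_sub_distrib, ← Finset.sum_mul]
        have hTb : (∑ i ∈ F b, a i * x i) = T b := rfl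
        rw [hTb]
        have hcs : T b ^ 2 ≤ (∑ i ∈ F b, (a i)^2) * ∑ i ∈ F b, (x i)^2 := by
          rw [hT]
          exact Finset.sum_mul_sq_le_sq_mul_sq (F b) a x
        have hx2 : 0 ≤ ∑ i ∈ F b, (x i)^2 := Finset.sum_nonneg fun i _ => sq_nonneg _
        have hcs2 : T b ^ 2 ≤ ∑ i ∈ F b, (x i)^2 :=
          hcs.trans (by nlinarith [ha2 b, hx2])
        have : T b * T b ≤ ∑ i ∈ F b, x i * x i := by
          have : ∑ i ∈ F b, x i * x i = ∑ i ∈ F b, (x i)^2 :=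
            Finset.sum_congr rfl fun i _ => (sq (x i)).symm ▸ rfl
          nlinarith [hcs2]
        linarith
      linarith
    exact ⟨Y, Matrix.posSemidef_iff_dotProduct_mulVec.mpr ⟨hherm, hquad⟩, hblk, fun w hw => by
      obtain ⟨c, rfl⟩ := Submodule.mem_span_singleton.mp hw
      show Y *ᵥ (c • (u : Fin n → ℝ)) = 0
      rw [Matrix.mulVec_smul, hYu0, smul_zero]⟩
end
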